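/- arXiv:2501.07064 — 6 statements merged into one kernel-verified Lean document; each statement's English description precedes it below -/
import Mathlib

section
/- Let 0 < p ≤ 1 and let f_1, …, f_n be nonnegative bounded measurable functions on a probability space. Then ‖∑_{k=1}^n f_k‖_p ≤ (1/p) · ‖∑_{k=1}^n E[f_k | ℱ_k]‖_p. (This is the commutative case of the paper's Theorem 1.1, the sharp dual Doob inequality for 0 < p ≤ 1.) -/
open MeasureTheory Finset
open scoped ENNReal

/-- The `p`-norm `(∫ |f|^p dμ)^(1/p)`, valued in `ℝ≥0∞`. -/
noncomputable def pnorm {Ω : Type*} [MeasurableSpace Ω] (μ : Measure Ω) (p : ℝ)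
    (f : Ω → ℝ) : ℝ≥0∞ :=
  (∫⁻ ω, ENNReal.ofReal |f ω| ^ p ∂μ) ^ (1 / p)

private lemma real_rpow_add_le {p x y : ℝ} (hp0 : 0 ≤ p) (hp1 : p ≤ 1) (hx : 0 ≤ x)
    (hy : 0 ≤ y) : (x + y) ^ p ≤ x ^ p + y ^ p := by
  have h := NNReal.rpow_add_le_add_rpow x.toNNReal y.toNNReal hp0 hp1
  have h2 := NNReal.coe_le_coe.2 h
  push_cast at h2
  rwa [Real.coe_toNNReal _ hx, Real.coe_toNNReal _ hy] at h2

private lemma key_rpow_ineq {p a b : ℝ} (hp0 : 0 < p) (hp1 : p ≤ 1)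
    (ha : 0 ≤ a) (hb : 0 < b) (hab : a ≤ b) :
    a ^ p + p * (b - a) * b ^ (p - 1) ≤ b ^ p := by
  have hbp : (0:ℝ) < b ^ (p - 1) := Real.rpow_pos_of_pos hb _
  have hgm := Real.geom_mean_le_arith_mean2_weighted (w₁ := p) (w₂ := 1 - p)
      (p₁ := a * b ^ (p - 1)) (p₂ := b ^ p) hp0.le (by linarith)
      (mul_nonneg ha hbp.le) (Real.rpow_nonneg hb.le _) (by ring)
  have hid : (a * b ^ (p - 1)) ^ p * (b ^ p) ^ (1 - p) = a ^ p := by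
    rw [Real.mul_rpow ha hbp.le, ← Real.rpow_mul hb.le, ← Real.rpow_mul hb.le, mul_assoc,
      ← Real.rpow_add hb]
    have h0 : (p - 1) * p + p * (1 - p) = 0 := by ring
    rw [h0, Real.rpow_zero, mul_one]
  rw [hid] at hgm
  have hbb : b * b ^ (p - 1) = b ^ p := by
    calc b * b ^ (p - 1) = b ^ (1 : ℝ) * b ^ (p - 1) := by rw [Real.rpow_one]
      _ = b ^ (1 + (p - 1)) := (Real.rpow_add hb _ _).symm
      _ = b ^ p := by ring_nf
  have hexp : p * (b - a) * b ^ (p - 1) = p * (b * b ^ (p - 1)) - p * (a * b ^ (p - 1)) := by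
    ring
  rw [hexp, hbb]
  linarith [hgm]

private lemma telescope_ineq {p : ℝ} (hp0 : 0 < p) (hp1 : p ≤ 1) {ε : ℝ} (hε : 0 < ε)
    (g : ℕ → ℝ) (hg : ∀ k, 0 ≤ g k) (n : ℕ) :
    p * ∑ k ∈ Icc 1 n, g k * (ε + ∑ j ∈ Icc 1 k, g j) ^ (p - 1)
      ≤ (ε + ∑ k ∈ Icc 1 n, g k) ^ p - ε ^ p := by
  induction n with
  | zero => simp
  | succ n ih =>
    have hs : ∀ h : ℕ → ℝ, ∑ k ∈ Icc 1 (n + 1), h k = (∑ k ∈ Icc 1 n, h k) + h (n + 1) :=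
      fun h => Finset.sum_Icc_succ_top (Nat.succ_le_succ (Nat.zero_le n)) h
    rw [hs, hs]
    have hA0 : 0 ≤ ∑ k ∈ Icc 1 n, g k := Finset.sum_nonneg fun j _ => hg j
    have key := key_rpow_ineq hp0 hp1 (a := ε + ∑ k ∈ Icc 1 n, g k)
        (b := ε + ((∑ k ∈ Icc 1 n, g k) + g (n + 1)))
        (by linarith) (by linarith [hg (n + 1)]) (by linarith [hg (n + 1)])
    linarith [ih, key]

/-- Sharp dual Doob inequality for `0 < p ≤ 1` (commutative case of Theorem 1.1). -/
theorem dual_doob_le_one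
    {Ω : Type*} {m0 : MeasurableSpace Ω} (μ : Measure Ω) [IsProbabilityMeasure μ]
    (ℱ : Filtration ℕ m0)
    (p : ℝ) (hp0 : 0 < p) (hp1 : p ≤ 1)
    (n : ℕ) (f : ℕ → Ω → ℝ)
    (hmeas : ∀ k, Measurable (f k))
    (hbdd : ∀ k, ∃ C : ℝ, ∀ ω, |f k ω| ≤ C)
    (hnonneg : ∀ k ω, 0 ≤ f k ω) :
    pnorm μ p (fun ω => ∑ k ∈ Finset.Icc 1 n, f k ω)
      ≤ ENNReal.ofReal (1 / p) *
        pnorm μ p (fun ω => ∑ k ∈ Finset.Icc 1 n, (μ[f k | ℱ k]) ω) := by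
  classical
  have hpne : p ≠ 0 := hp0.ne'
  set g : ℕ → Ω → ℝ := fun k => μ[f k | ℱ k] with hgdef
  set S : Ω → ℝ := fun ω => ∑ k ∈ Icc 1 n, f k ω with hSdef
  set T : ℕ → Ω → ℝ := fun k ω => ∑ j ∈ Icc 1 k, g j ω with hTdef
  choose C0 hC0 using hbdd
  set C : ℕ → ℝ := fun k => max (C0 k) 0 with hCdef
  have hCnn : ∀ k, 0 ≤ C k := fun k => le_max_right _ _
  have hfC : ∀ k ω, |f k ω| ≤ C k := fun k ω => (hC0 k ω).trans (le_max_left _ _)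
  have hbint : ∀ (h : Ω → ℝ) (c : ℝ), AEStronglyMeasurable h μ →
      (∀ᵐ ω ∂μ, |h ω| ≤ c) → Integrable h μ :=
    fun h c hm hb => (integrable_const c).mono' hm (by simpa [Real.norm_eq_abs] using hb)
  have hSMg : ∀ k, StronglyMeasurable[ℱ k] (g k) := fun k => stronglyMeasurable_condExp
  have hmg : ∀ k, Measurable (g k) := fun k => ((hSMg k).mono (ℱ.le k)).measurable
  have hfint : ∀ k, Integrable (f k) μ := fun k =>
    hbint _ (C k) (hmeas k).aestronglyMeasurable (ae_of_all μ (hfC k))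
  have hgint : ∀ k, Integrable (g k) μ := fun k => integrable_condExp
  have hgnn : ∀ k, 0 ≤ᵐ[μ] g k := fun k => condExp_nonneg (ae_of_all μ (hnonneg k))
  have hgleC : ∀ k, ∀ᵐ ω ∂μ, g k ω ≤ C k := by
    intro k
    have h1 : f k ≤ᵐ[μ] (fun _ => C k) :=
      ae_of_all μ fun ω => (le_abs_self _).trans (hfC k ω)
    have h2 := condExp_mono (m := ℱ k) (hfint k) (integrable_const (C k)) h1
    have h3 : μ[(fun _ => C k)|ℱ k] = fun _ => C k := condExp_const (ℱ.le k) (C k)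
    filter_upwards [h2] with ω hω
    rw [h3] at hω
    exact hω
  have hae : ∀ᵐ ω ∂μ, ∀ k, 0 ≤ g k ω ∧ g k ω ≤ C k := by
    rw [ae_all_iff]
    intro k
    filter_upwards [hgnn k, hgleC k] with ω h1 h2
    exact ⟨h1, h2⟩
  set Bf : ℝ := ∑ k ∈ Icc 1 n, C k with hBf
  have hBfnn : 0 ≤ Bf := Finset.sum_nonneg fun k _ => hCnn k
  have hSnn : ∀ ω, 0 ≤ S ω := fun ω => Finset.sum_nonneg fun k _ => hnonneg k ω
  have hSle : ∀ ω, S ω ≤ Bf := fun ω =>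
    Finset.sum_le_sum fun k _ => (le_abs_self _).trans (hfC k ω)
  have hmT : ∀ k, Measurable (T k) := fun k => Finset.measurable_sum _ fun j _ => hmg j
  have hmS : Measurable S := Finset.measurable_sum _ fun k _ => hmeas k
  set IT : ℝ := ∫ ω, |T n ω| ^ p ∂μ with hIT
  set IS : ℝ := ∫ ω, S ω ^ p ∂μ with hIS
  have hintSp : Integrable (fun ω => S ω ^ p) μ := by
    refine hbint _ (Bf ^ p) ((hmS.pow_const p).aestronglyMeasurable) (ae_of_all μ fun ω => ?_)
    rw [abs_of_nonneg (Real.rpow_nonneg (hSnn ω) p)]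
    exact Real.rpow_le_rpow (hSnn ω) (hSle ω) hp0.le
  have hintTp : Integrable (fun ω => |T n ω| ^ p) μ := by
    refine hbint _ (Bf ^ p) (((hmT n).abs.pow_const p).aestronglyMeasurable) ?_
    filter_upwards [hae] with ω hω
    have h1 : 0 ≤ T n ω := Finset.sum_nonneg fun j _ => (hω j).1
    have h2 : T n ω ≤ Bf := Finset.sum_le_sum fun j _ => (hω j).2
    rw [abs_of_nonneg (Real.rpow_nonneg (abs_nonneg _) p)]
    exact Real.rpow_le_rpow (abs_nonneg _) (by rw [abs_of_nonneg h1]; exact h2) hp0.le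
  have hintepsTp : ∀ ε : ℝ, 0 < ε → Integrable (fun ω => (ε + T n ω) ^ p) μ := by
    intro ε hε
    refine hbint _ ((ε + Bf) ^ p)
      (((measurable_const.add (hmT n)).pow_const p).aestronglyMeasurable) ?_
    filter_upwards [hae] with ω hω
    have h1 : 0 ≤ T n ω := Finset.sum_nonneg fun j _ => (hω j).1
    have h2 : T n ω ≤ Bf := Finset.sum_le_sum fun j _ => (hω j).2
    rw [abs_of_nonneg (Real.rpow_nonneg (by linarith) p)]
    exact Real.rpow_le_rpow (by linarith) (by linarith) hp0.le
  -- The key inequality, in terms of real Bochner integrals.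
  have KEY : IS ≤ (1 / p) ^ p * IT := by
    have EPS : ∀ ε : ℝ, 0 < ε → IS ≤ (1 / p) ^ p * ∫ ω, (ε + T n ω) ^ p ∂μ := by
      intro ε hε
      set H : Ω → ℝ := fun ω => (ε + T n ω) ^ (p - 1) with hHdef
      set h : ℕ → Ω → ℝ := fun k ω => (ε + T k ω) ^ (p - 1) with hhdef
      have hmH : Measurable H := (measurable_const.add (hmT n)).pow_const _
      have hmh : ∀ k, Measurable (h k) := fun k => (measurable_const.add (hmT k)).pow_const _
      have hSMhk : ∀ k, StronglyMeasurable[ℱ k] (h k) := by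
        intro k
        have hTk : Measurable[ℱ k] (T k) := Finset.measurable_sum _ fun j hj =>
          ((hSMg j).mono (ℱ.mono (Finset.mem_Icc.1 hj).2)).measurable
        exact ((measurable_const.add hTk).pow_const _).stronglyMeasurable
      have hhbd : ∀ k, ∀ᵐ ω ∂μ, 0 ≤ h k ω ∧ h k ω ≤ ε ^ (p - 1) := by
        intro k
        filter_upwards [hae] with ω hω
        have h1 : 0 ≤ T k ω := Finset.sum_nonneg fun j _ => (hω j).1
        exact ⟨Real.rpow_nonneg (by linarith) _,
          Real.rpow_le_rpow_of_nonpos hε (by linarith) (by linarith)⟩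
      have hHbd : ∀ᵐ ω ∂μ, 0 ≤ H ω ∧ H ω ≤ ε ^ (p - 1) := hhbd n
      have hint_fkH : ∀ k, Integrable (fun ω => f k ω * H ω) μ := by
        intro k
        refine hbint _ (C k * ε ^ (p - 1)) (((hmeas k).mul hmH).aestronglyMeasurable) ?_
        filter_upwards [hHbd] with ω hω
        rw [abs_mul, abs_of_nonneg hω.1]
        exact mul_le_mul (hfC k ω) hω.2 hω.1 (hCnn k)
      have hint_fkhk : ∀ k, Integrable (fun ω => f k ω * h k ω) μ := by
        intro k
        refine hbint _ (C k * ε ^ (p - 1)) (((hmeas k).mul (hmh k)).aestronglyMeasurable) ?_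
        filter_upwards [hhbd k] with ω hω
        rw [abs_mul, abs_of_nonneg hω.1]
        exact mul_le_mul (hfC k ω) hω.2 hω.1 (hCnn k)
      have hint_hkfk : ∀ k, Integrable (h k * f k) μ := by
        intro k
        have := hint_fkhk k
        refine this.congr (ae_of_all μ fun ω => ?_)
        simp [mul_comm]
      have hint_gkhk : ∀ k, Integrable (fun ω => g k ω * h k ω) μ := by
        intro k
        refine hbint _ (C k * ε ^ (p - 1)) (((hmg k).mul (hmh k)).aestronglyMeasurable) ?_
        filter_upwards [hhbd k, hae] with ω hω hω2
        rw [abs_mul, abs_of_nonneg hω.1, abs_of_nonneg (hω2 k).1]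
        exact mul_le_mul (hω2 k).2 hω.2 hω.1 (hCnn k)
      have hint_SH : Integrable (fun ω => S ω * H ω) μ := by
        refine hbint _ (Bf * ε ^ (p - 1)) ((hmS.mul hmH).aestronglyMeasurable) ?_
        filter_upwards [hHbd] with ω hω
        rw [abs_mul, abs_of_nonneg hω.1, abs_of_nonneg (hSnn ω)]
        exact mul_le_mul (hSle ω) hω.2 hω.1 hBfnn
      have hint_sum : Integrable (fun ω => ∑ k ∈ Icc 1 n, g k ω * h k ω) μ :=
        integrable_finset_sum _ fun k _ => hint_gkhk k
      -- Step 1 : expand S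
      have step1 : ∫ ω, S ω * H ω ∂μ = ∑ k ∈ Icc 1 n, ∫ ω, f k ω * H ω ∂μ := by
        rw [← integral_finset_sum _ fun k _ => hint_fkH k]
        exact integral_congr_ae (ae_of_all μ fun ω => by
          simp only [hSdef, Finset.sum_mul])
      -- Step 2 : replace H by h k (monotonicity)
      have step2 : ∀ k ∈ Icc 1 n, ∫ ω, f k ω * H ω ∂μ ≤ ∫ ω, f k ω * h k ω ∂μ := by
        intro k hk
        refine integral_mono_ae (hint_fkH k) (hint_fkhk k) ?_
        filter_upwards [hae] with ω hω
        have h1 : 0 ≤ T k ω := Finset.sum_nonneg fun j _ => (hω j).1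
        have hmono : T k ω ≤ T n ω :=
          Finset.sum_le_sum_of_subset_of_nonneg
            (Finset.Icc_subset_Icc_right (Finset.mem_Icc.1 hk).2) fun j _ _ => (hω j).1
        have hH : H ω ≤ h k ω :=
          Real.rpow_le_rpow_of_nonpos (by linarith) (by linarith) (by linarith)
        exact mul_le_mul_of_nonneg_left hH (hnonneg k ω)
      -- Step 3 : conditional expectation pull-out
      have step3 : ∀ k, ∫ ω, f k ω * h k ω ∂μ = ∫ ω, g k ω * h k ω ∂μ := by
        intro k
        have hpull := condExp_mul_of_stronglyMeasurable_left (m := ℱ k) (μ := μ) (hSMhk k)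
          (hint_hkfk k) (hfint k)
        calc ∫ ω, f k ω * h k ω ∂μ
            = ∫ ω, (h k * f k) ω ∂μ :=
              integral_congr_ae (ae_of_all μ fun ω => mul_comm _ _)
          _ = ∫ ω, (μ[h k * f k|ℱ k]) ω ∂μ := (integral_condExp (ℱ.le k)).symm
          _ = ∫ ω, (h k * μ[f k|ℱ k]) ω ∂μ := integral_congr_ae hpull
          _ = ∫ ω, g k ω * h k ω ∂μ :=
              integral_congr_ae (ae_of_all μ fun ω => mul_comm _ _)
      -- Step 4 : telescoping
      have step4 : ∑ k ∈ Icc 1 n, ∫ ω, g k ω * h k ω ∂μ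
          ≤ (1 / p) * ∫ ω, (ε + T n ω) ^ p ∂μ := by
        rw [← integral_finset_sum _ fun k _ => hint_gkhk k]
        have hle : ∀ᵐ ω ∂μ, ∑ k ∈ Icc 1 n, g k ω * h k ω
            ≤ (1 / p) * (ε + T n ω) ^ p := by
          filter_upwards [hae] with ω hω
          have tele := telescope_ineq hp0 hp1 hε (fun k => g k ω) (fun k => (hω k).1) n
          have h2 : ∑ k ∈ Icc 1 n, g k ω * h k ω
              = ∑ k ∈ Icc 1 n, g k ω * (ε + ∑ j ∈ Icc 1 k, g j ω) ^ (p - 1) := rfl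
          have hεp : 0 ≤ ε ^ p := Real.rpow_nonneg hε.le p
          have hTn : T n ω = ∑ k ∈ Icc 1 n, g k ω := rfl
          rw [h2, hTn, one_div, ← div_eq_inv_mul, le_div_iff₀ hp0]
          linarith [tele, hεp]
        calc ∫ ω, ∑ k ∈ Icc 1 n, g k ω * h k ω ∂μ
            ≤ ∫ ω, (1 / p) * (ε + T n ω) ^ p ∂μ :=
              integral_mono_ae hint_sum ((hintepsTp ε hε).const_mul _) hle
          _ = (1 / p) * ∫ ω, (ε + T n ω) ^ p ∂μ := integral_const_mul _ _
      have CORE : ∫ ω, S ω * H ω ∂μ ≤ (1 / p) * ∫ ω, (ε + T n ω) ^ p ∂μ := by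
        rw [step1]
        calc ∑ k ∈ Icc 1 n, ∫ ω, f k ω * H ω ∂μ
            ≤ ∑ k ∈ Icc 1 n, ∫ ω, f k ω * h k ω ∂μ := Finset.sum_le_sum step2
          _ = ∑ k ∈ Icc 1 n, ∫ ω, g k ω * h k ω ∂μ :=
              Finset.sum_congr rfl fun k _ => step3 k
          _ ≤ (1 / p) * ∫ ω, (ε + T n ω) ^ p ∂μ := step4
      set J : ℝ := ∫ ω, (ε + T n ω) ^ p ∂μ with hJ
      have hJ0 : 0 ≤ J := by
        rw [hJ]
        refine integral_nonneg_of_ae ?_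
        filter_upwards [hae] with ω hω
        have h1 : 0 ≤ T n ω := Finset.sum_nonneg fun j _ => (hω j).1
        exact Real.rpow_nonneg (by linarith) _
      by_cases hp1' : p = 1
      · -- p = 1 : no Hölder needed
        have e : IS = ∫ ω, S ω * H ω ∂μ := by
          rw [hIS]
          refine integral_congr_ae (ae_of_all μ fun ω => ?_)
          show S ω ^ p = S ω * H ω
          have hH1 : H ω = 1 := by
            show (ε + T n ω) ^ (p - 1) = 1
            rw [hp1', sub_self, Real.rpow_zero]
          rw [hH1, mul_one, hp1', Real.rpow_one]
        have hc1 : (1 / p) ^ p = 1 / p := by rw [hp1']; simp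
        rw [e, hc1]
        exact CORE
      · -- 0 < p < 1 : Hölder
        have hplt : p < 1 := lt_of_le_of_ne hp1 hp1'
        have h1p : (0:ℝ) < 1 - p := by linarith
        set ISH : ℝ := ∫ ω, S ω * H ω ∂μ with hISH
        have hISH0 : 0 ≤ ISH := by
          rw [hISH]
          refine integral_nonneg_of_ae ?_
          filter_upwards [hHbd] with ω hω
          exact mul_nonneg (hSnn ω) hω.1
        have hpt : ∀ᵐ ω ∂μ, ENNReal.ofReal (S ω ^ p)
            = ENNReal.ofReal (S ω * H ω) ^ p
              * ENNReal.ofReal ((ε + T n ω) ^ p) ^ (1 - p) := by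
          filter_upwards [hae] with ω hω
          have h1 : 0 ≤ T n ω := Finset.sum_nonneg fun j _ => (hω j).1
          have hx : (0:ℝ) < ε + T n ω := by linarith
          have hHnn : 0 ≤ H ω := Real.rpow_nonneg hx.le _
          rw [ENNReal.ofReal_rpow_of_nonneg (mul_nonneg (hSnn ω) hHnn) hp0.le,
              ENNReal.ofReal_rpow_of_nonneg (Real.rpow_nonneg hx.le _) (by linarith),
              ← ENNReal.ofReal_mul (Real.rpow_nonneg (mul_nonneg (hSnn ω) hHnn) _)]
          congr 1
          have e1 : (S ω * H ω) ^ p = S ω ^ p * (ε + T n ω) ^ ((p - 1) * p) := by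
            rw [show H ω = (ε + T n ω) ^ (p - 1) from rfl,
                Real.mul_rpow (hSnn ω) (Real.rpow_nonneg hx.le _),
                ← Real.rpow_mul hx.le]
          have e2 : ((ε + T n ω) ^ p) ^ (1 - p) = (ε + T n ω) ^ (p * (1 - p)) := by
            rw [← Real.rpow_mul hx.le]
          rw [e1, e2, mul_assoc, ← Real.rpow_add hx,
              show (p - 1) * p + p * (1 - p) = 0 by ring, Real.rpow_zero, mul_one]
        have hconj : (1 / p).HolderConjugate (1 / (1 - p)) := by
          rw [Real.holderConjugate_iff]
          constructor
          · rw [lt_div_iff₀ hp0]; linarith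
          · rw [one_div, one_div, inv_inv, inv_inv]; ring
        have hu : AEMeasurable (fun ω => ENNReal.ofReal (S ω * H ω) ^ p) μ :=
          (((hmS.mul hmH).ennreal_ofReal).pow_const p).aemeasurable
        have hv : AEMeasurable
            (fun ω => ENNReal.ofReal ((ε + T n ω) ^ p) ^ (1 - p)) μ :=
          ((((measurable_const.add (hmT n)).pow_const p).ennreal_ofReal).pow_const
            (1 - p)).aemeasurable
        have ef : ∀ ω : Ω, (ENNReal.ofReal (S ω * H ω) ^ p) ^ (1 / p)
            = ENNReal.ofReal (S ω * H ω) := fun ω => by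
          rw [one_div, ENNReal.rpow_rpow_inv hpne]
        have eg : ∀ ω : Ω, (ENNReal.ofReal ((ε + T n ω) ^ p) ^ (1 - p)) ^ (1 / (1 - p))
            = ENNReal.ofReal ((ε + T n ω) ^ p) := fun ω => by
          rw [one_div, ENNReal.rpow_rpow_inv h1p.ne']
        have lu : ∫⁻ ω, ENNReal.ofReal (S ω * H ω) ∂μ = ENNReal.ofReal ISH := by
          rw [hISH, ofReal_integral_eq_lintegral_ofReal hint_SH ?_]
          filter_upwards [hHbd] with ω hω
          exact mul_nonneg (hSnn ω) hω.1
        have lv : ∫⁻ ω, ENNReal.ofReal ((ε + T n ω) ^ p) ∂μ = ENNReal.ofReal J := by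
          rw [hJ, ofReal_integral_eq_lintegral_ofReal (hintepsTp ε hε) ?_]
          filter_upwards [hae] with ω hω
          have h1 : 0 ≤ T n ω := Finset.sum_nonneg fun j _ => (hω j).1
          exact Real.rpow_nonneg (by linarith) _
        have lS : ∫⁻ ω, ENNReal.ofReal (S ω ^ p) ∂μ = ENNReal.ofReal IS := by
          rw [hIS, ofReal_integral_eq_lintegral_ofReal hintSp
            (ae_of_all μ fun ω => Real.rpow_nonneg (hSnn ω) p)]
        have main : ENNReal.ofReal IS
            ≤ ENNReal.ofReal ISH ^ p * ENNReal.ofReal J ^ (1 - p) := by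
          have h0 : ∫⁻ ω, ENNReal.ofReal (S ω ^ p) ∂μ
              = ∫⁻ ω, ((fun ω => ENNReal.ofReal (S ω * H ω) ^ p)
                * fun ω => ENNReal.ofReal ((ε + T n ω) ^ p) ^ (1 - p)) ω ∂μ :=
            lintegral_congr_ae (hpt.mono fun ω hω => hω)
          rw [← lS, h0]
          refine le_trans (ENNReal.lintegral_mul_le_Lp_mul_Lq μ hconj hu hv) ?_
          rw [one_div_one_div, one_div_one_div]
          simp only [ef, eg]
          rw [lu, lv]
        have hCORE' : ENNReal.ofReal ISH ≤ ENNReal.ofReal ((1 / p) * J) :=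
          ENNReal.ofReal_le_ofReal CORE
        have hrhs : ENNReal.ofReal ((1 / p) * J) ^ p * ENNReal.ofReal J ^ (1 - p)
            = ENNReal.ofReal ((1 / p) ^ p * J) := by
          rw [ENNReal.ofReal_rpow_of_nonneg (mul_nonneg (by positivity) hJ0) hp0.le,
              ENNReal.ofReal_rpow_of_nonneg hJ0 h1p.le,
              ← ENNReal.ofReal_mul (Real.rpow_nonneg (mul_nonneg (by positivity) hJ0) _)]
          congr 1
          rcases eq_or_lt_of_le hJ0 with hJz | hJpos
          · rw [← hJz]
            simp [Real.zero_rpow hpne]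
          · rw [Real.mul_rpow (by positivity) hJ0, mul_assoc, ← Real.rpow_add hJpos,
                show p + (1 - p) = 1 by ring, Real.rpow_one]
        have main2 : ENNReal.ofReal IS ≤ ENNReal.ofReal ((1 / p) ^ p * J) := by
          refine main.trans ?_
          rw [← hrhs]
          exact mul_le_mul_left (ENNReal.rpow_le_rpow hCORE' hp0.le) _
        exact (ENNReal.ofReal_le_ofReal_iff
          (mul_nonneg (by positivity) hJ0)).1 main2
    -- deduce KEY from EPS by letting ε → 0
    by_contra hcon
    push_neg at hcon
    set c : ℝ := (1 / p) ^ p with hc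
    have hcpos : 0 < c := by rw [hc]; positivity
    have hcne : c ≠ 0 := hcpos.ne'
    set d : ℝ := IS - c * IT with hd
    have hdpos : 0 < d := by rw [hd]; linarith
    set ε : ℝ := (d / (2 * c)) ^ (1 / p) with hεdef
    have hεpos : 0 < ε := Real.rpow_pos_of_pos (by positivity) _
    have hεp : ε ^ p = d / (2 * c) := by
      rw [hεdef, one_div, Real.rpow_inv_rpow (by positivity) hpne]
    have h1 := EPS ε hεpos
    have h2 : ∫ ω, (ε + T n ω) ^ p ∂μ ≤ ε ^ p + IT := by
      have hpt2 : ∀ᵐ ω ∂μ, (ε + T n ω) ^ p ≤ ε ^ p + |T n ω| ^ p := by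
        filter_upwards [hae] with ω hω
        have h1' : 0 ≤ T n ω := Finset.sum_nonneg fun j _ => (hω j).1
        have h3 := real_rpow_add_le hp0.le hp1 hεpos.le h1'
        rwa [abs_of_nonneg h1']
      calc ∫ ω, (ε + T n ω) ^ p ∂μ
          ≤ ∫ ω, (ε ^ p + |T n ω| ^ p) ∂μ :=
            integral_mono_ae (hintepsTp ε hεpos) ((integrable_const _).add hintTp) hpt2
        _ = ε ^ p + IT := by
            rw [integral_add (integrable_const _) hintTp, integral_const]
            simp [hIT]
    have h3 : IS ≤ c * (ε ^ p + IT) :=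
      h1.trans (mul_le_mul_of_nonneg_left h2 (by positivity))
    have h4 : c * ε ^ p = d / 2 := by
      rw [hεp]
      field_simp
    linarith [h3, h4]
  -- conclude from KEY
  have hITnn : 0 ≤ IT := by
    rw [hIT]; exact integral_nonneg fun ω => Real.rpow_nonneg (abs_nonneg _) _
  have hLS : (∫⁻ ω, ENNReal.ofReal |S ω| ^ p ∂μ) = ENNReal.ofReal IS := by
    rw [hIS, ofReal_integral_eq_lintegral_ofReal hintSp
      (ae_of_all μ fun ω => Real.rpow_nonneg (hSnn ω) p)]
    refine lintegral_congr fun ω => ?_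
    rw [abs_of_nonneg (hSnn ω), ENNReal.ofReal_rpow_of_nonneg (hSnn ω) hp0.le]
  have hLT : (∫⁻ ω, ENNReal.ofReal |T n ω| ^ p ∂μ) = ENNReal.ofReal IT := by
    rw [hIT, ofReal_integral_eq_lintegral_ofReal hintTp
      (ae_of_all μ fun ω => Real.rpow_nonneg (abs_nonneg _) p)]
    refine lintegral_congr fun ω => ?_
    rw [ENNReal.ofReal_rpow_of_nonneg (abs_nonneg _) hp0.le]
  show pnorm μ p S ≤ ENNReal.ofReal (1 / p) * pnorm μ p (T n)
  simp only [pnorm]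
  rw [hLS, hLT]
  calc (ENNReal.ofReal IS) ^ (1 / p)
      ≤ (ENNReal.ofReal ((1 / p) ^ p * IT)) ^ (1 / p) :=
        ENNReal.rpow_le_rpow (ENNReal.ofReal_le_ofReal KEY) (by positivity)
    _ = ENNReal.ofReal (1 / p) * (ENNReal.ofReal IT) ^ (1 / p) := by
        rw [ENNReal.ofReal_mul (by positivity),
            ENNReal.mul_rpow_of_nonneg _ _ (by positivity)]
        congr 1
        rw [ENNReal.ofReal_rpow_of_nonneg (by positivity) (by positivity)]
        congr 1
        rw [one_div, Real.rpow_rpow_inv (by positivity) hpne]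
end

section
/- Let 1 ≤ p < ∞ and let f_1, …, f_n be nonnegative measurable functions on a probability space with each f_k ∈ L^p(μ). Then ‖∑_{k=1}^n E[f_k | ℱ_k]‖_p ≤ p · ‖∑_{k=1}^n f_k‖_p. (This is the commutative case of the paper's Theorem 1.2, which by Remark 2.5 holds in the commutative setting for the full range 1 ≤ p < ∞.) -/
open MeasureTheory Finset
open scoped ENNReal

/-- Core convexity inequality: for `0 ≤ b ≤ a` and `p ≥ 1`,
`a^p - b^p ≤ p * a^(p-1) * (a - b)`. -/
lemma dualDoob_rpow_sub_rpow_le {p : ℝ} (hp : 1 ≤ p) {a b : ℝ} (hb : 0 ≤ b) (hba : b ≤ a) :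
    a ^ p - b ^ p ≤ p * a ^ (p - 1) * (a - b) := by
  have hp0 : (0:ℝ) < p := lt_of_lt_of_le one_pos hp
  have ha : 0 ≤ a := hb.trans hba
  rcases ha.eq_or_lt with h | hapos
  · have hb0 : b = 0 := le_antisymm (hba.trans h.ge) hb
    rw [← h, hb0, Real.zero_rpow hp0.ne']
    simp
  · have key : 1 + p * (b / a - 1) ≤ (b / a) ^ p := by
      have h1 : (-1 : ℝ) ≤ b / a - 1 := by
        have : 0 ≤ b / a := div_nonneg hb hapos.le
        linarith
      have := one_add_mul_self_le_rpow_one_add h1 hp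
      rwa [add_sub_cancel] at this
    have hA : a ^ (p - 1) * a = a ^ p := by
      rw [← Real.rpow_add_one hapos.ne' (p - 1)]
      norm_num
    have h2 : a ^ p * (1 + p * (b / a - 1)) ≤ a ^ p * ((b / a) ^ p) :=
      mul_le_mul_of_nonneg_left key (Real.rpow_nonneg hapos.le p)
    have h3 : a ^ p * ((b / a) ^ p) = b ^ p := by
      rw [← Real.mul_rpow hapos.le (div_nonneg hb hapos.le),
        mul_div_cancel₀ _ hapos.ne']
    have hab : a ^ p * (b / a) = a ^ (p - 1) * b := by
      rw [← hA]; field_simp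
    calc a ^ p - b ^ p ≤ a ^ p - a ^ p * (1 + p * (b / a - 1)) := by
          rw [h3] at h2; linarith
      _ = p * (a ^ p - a ^ p * (b / a)) := by ring
      _ = p * a ^ (p - 1) * (a - b) := by rw [hab, ← hA]; ring

/-- Truncated version of the convexity inequality. -/
lemma dualDoob_trunc_rpow_sub_le {p : ℝ} (hp : 1 ≤ p) {a b c : ℝ} (hb : 0 ≤ b) (hba : b ≤ a)
    (hc : 0 ≤ c) :
    min a c ^ p - min b c ^ p ≤ p * min a c ^ (p - 1) * (a - b) := by
  have h1 : (0:ℝ) ≤ min b c := le_min hb hc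
  have h2 : min b c ≤ min a c := min_le_min hba le_rfl
  have h3 : min a c - min b c ≤ a - b := by
    rcases le_total a c with h | h
    · rw [min_eq_left h, min_eq_left (hba.trans h)]
    · rw [min_eq_right h]
      rcases le_total b c with h' | h'
      · rw [min_eq_left h']; linarith
      · rw [min_eq_right h']; linarith
  calc min a c ^ p - min b c ^ p ≤ p * min a c ^ (p - 1) * (min a c - min b c) :=
        dualDoob_rpow_sub_rpow_le hp h1 h2
    _ ≤ p * min a c ^ (p - 1) * (a - b) := by
        apply mul_le_mul_of_nonneg_left h3
        exact mul_nonneg (by linarith) (Real.rpow_nonneg (le_min (hb.trans hba) hc) _)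

/-- Sharp dual Doob inequality for `1 ≤ p < ∞`
(commutative case of Theorem 1.2 together with Remark 2.5). -/
theorem dual_doob_ge_one
    {Ω : Type*} {m0 : MeasurableSpace Ω} (μ : Measure Ω) [IsProbabilityMeasure μ]
    (ℱ : Filtration ℕ m0)
    (p : ℝ) (hp : 1 ≤ p)
    (n : ℕ) (f : ℕ → Ω → ℝ)
    (hmeas : ∀ k, Measurable (f k))
    (hmem : ∀ k, MemLp (f k) (ENNReal.ofReal p) μ)
    (hnonneg : ∀ k ω, 0 ≤ f k ω) :
    pnorm μ p (fun ω => ∑ k ∈ Finset.Icc 1 n, (μ[f k | ℱ k]) ω)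
      ≤ ENNReal.ofReal p *
        pnorm μ p (fun ω => ∑ k ∈ Finset.Icc 1 n, f k ω) := by
  classical
  have hp0 : (0:ℝ) < p := lt_of_lt_of_le one_pos hp
  have hp1 : (0:ℝ) ≤ p - 1 := by linarith
  have hp1' : (1:ℝ≥0∞) ≤ ENNReal.ofReal p := ENNReal.one_le_ofReal.mpr hp
  set F : ℕ → Ω → ℝ := fun k => μ[f k | ℱ k] with hFdef
  set g : ℕ → Ω → ℝ := fun k ω => ∑ j ∈ Finset.Icc 1 k, F j ω with hgdef
  set G : Ω → ℝ := fun ω => ∑ k ∈ Finset.Icc 1 n, f k ω with hGdef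
  -- truncation
  set T : ℝ → ℝ → ℝ := fun c x => min (max x 0) c with hTdef
  have hT0 : ∀ c x, 0 ≤ c → 0 ≤ T c x := fun c x hc => le_min (le_max_right _ _) hc
  have hTle : ∀ c x, T c x ≤ c := fun c x => min_le_right _ _
  -- weights
  set w : ℝ → ℕ → Ω → ℝ := fun c k ω => T c (g k ω) ^ (p - 1) with hwdef
  -- measurability
  have hFmeasF : ∀ k, Measurable[ℱ k] (F k) := fun k => stronglyMeasurable_condExp.measurable
  have hgmeasF : ∀ k, Measurable[ℱ k] (g k) := fun k =>
    Finset.measurable_sum _ fun j hj =>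
      (hFmeasF j).mono (ℱ.mono (Finset.mem_Icc.mp hj).2) le_rfl
  have hgmeas : ∀ k, Measurable (g k) := fun k => (hgmeasF k).mono (ℱ.le k) le_rfl
  have hrpow_meas : ∀ r : ℝ, 0 ≤ r → Measurable fun x : ℝ => x ^ r := fun r hr =>
    (Real.continuous_rpow_const hr).measurable
  have hTmeasF : ∀ c k, Measurable[ℱ k] fun ω => T c (g k ω) := fun c k =>
    ((hgmeasF k).max measurable_const).min measurable_const
  have hwmeasF : ∀ c k, Measurable[ℱ k] (w c k) := fun c k =>
    (hrpow_meas _ hp1).comp (hTmeasF c k)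
  have hwmeas : ∀ c k, Measurable (w c k) := fun c k => (hwmeasF c k).mono (ℱ.le k) le_rfl
  have hGmeas : Measurable G := Finset.measurable_sum _ fun k _ => hmeas k
  -- positivity data
  have hF0 : ∀ k, 0 ≤ᵐ[μ] F k := fun k =>
    condExp_nonneg (Filter.Eventually.of_forall (hnonneg k))
  have hF0' : ∀ᵐ ω ∂μ, ∀ j, 0 ≤ F j ω := ae_all_iff.2 hF0
  have hG0 : ∀ ω, 0 ≤ G ω := fun ω => Finset.sum_nonneg fun k _ => hnonneg k ω
  -- integrability data
  have hfint : ∀ k, Integrable (f k) μ := fun k => (hmem k).integrable hp1'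
  have hFint : ∀ k, Integrable (F k) μ := fun _ => integrable_condExp
  have hGmem : MemLp G (ENNReal.ofReal p) μ :=
    memLp_finset_sum _ fun k _ => hmem k
  have hGint : Integrable G μ := hGmem.integrable hp1'
  -- bounds on the weights
  have hwbdd : ∀ c k ω, 0 ≤ c → ‖w c k ω‖ ≤ c ^ (p - 1) := by
    intro c k ω hc
    rw [Real.norm_of_nonneg (Real.rpow_nonneg (hT0 c _ hc) _)]
    exact Real.rpow_le_rpow (hT0 c _ hc) (hTle c _) hp1
  -- integrability of the truncated power
  have hTpow_int : ∀ c : ℝ, 0 ≤ c → ∀ k, Integrable (fun ω => T c (g k ω) ^ p) μ := by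
    intro c hc k
    have hsm : AEStronglyMeasurable (fun ω => T c (g k ω) ^ p) μ :=
      ((hrpow_meas p hp0.le).comp
        (((hgmeas k).max measurable_const).min measurable_const)).aestronglyMeasurable
    refine memLp_one_iff_integrable.mp (MemLp.of_bound hsm (c ^ p) ?_)
    refine Filter.Eventually.of_forall fun ω => ?_
    rw [Real.norm_of_nonneg (Real.rpow_nonneg (hT0 c _ hc) _)]
    exact Real.rpow_le_rpow (hT0 c _ hc) (hTle c _) hp0.le
  -- integrability of products
  have hwF_int : ∀ c : ℝ, 0 ≤ c → ∀ k, Integrable (fun ω => w c k ω * F k ω) μ := by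
    intro c hc k
    exact (hFint k).bdd_mul (hwmeas c k).aestronglyMeasurable
      (Filter.Eventually.of_forall fun ω => hwbdd c k ω hc)
  have hwf_int : ∀ c : ℝ, 0 ≤ c → ∀ j k, Integrable (fun ω => w c j ω * f k ω) μ := by
    intro c hc j k
    exact (hfint k).bdd_mul (hwmeas c j).aestronglyMeasurable
      (Filter.Eventually.of_forall fun ω => hwbdd c j ω hc)
  -- Step 1: pointwise a.e. telescoping inequality
  have hS1 : ∀ c : ℝ, 0 ≤ c → ∀ᵐ ω ∂μ,
      T c (g n ω) ^ p ≤ p * ∑ k ∈ Finset.Icc 1 n, w c k ω * F k ω := by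
    intro c hc
    filter_upwards [hF0'] with ω hω
    have hg0ω : ∀ m, 0 ≤ g m ω := fun m => Finset.sum_nonneg fun j _ => hω j
    suffices h : ∀ m, T c (g m ω) ^ p ≤ p * ∑ k ∈ Finset.Icc 1 m, w c k ω * F k ω from h n
    intro m
    induction m with
    | zero =>
        have hg00 : g 0 ω = 0 := by
          simp only [hgdef]
          rw [Finset.Icc_eq_empty (by norm_num : ¬ (1:ℕ) ≤ 0), Finset.sum_empty]
        rw [hg00, Finset.Icc_eq_empty (by norm_num : ¬ (1:ℕ) ≤ 0), Finset.sum_empty, mul_zero]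
        have hT00 : T c 0 = 0 := by
          simp only [hTdef, max_self]
          exact min_eq_left hc
        rw [hT00, Real.zero_rpow hp0.ne']
    | succ m ih =>
        have hstep : g (m + 1) ω = g m ω + F (m + 1) ω := by
          simp only [hgdef]
          rw [Finset.sum_Icc_succ_top (Nat.succ_le_succ (Nat.zero_le m))]
        have hkey : T c (g (m + 1) ω) ^ p - T c (g m ω) ^ p
            ≤ p * T c (g (m + 1) ω) ^ (p - 1) * (g (m + 1) ω - g m ω) := by
          have hmax1 : max (g m ω) 0 = g m ω := max_eq_left (hg0ω m)
          have hmax2 : max (g (m + 1) ω) 0 = g (m + 1) ω := max_eq_left (hg0ω (m + 1))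
          have hle : g m ω ≤ g (m + 1) ω := by
            rw [hstep]; linarith [hω (m + 1)]
          simpa only [hTdef, hmax1, hmax2] using
            dualDoob_trunc_rpow_sub_le hp (hg0ω m) hle hc
        have hsum : ∑ k ∈ Finset.Icc 1 (m + 1), w c k ω * F k ω
            = (∑ k ∈ Finset.Icc 1 m, w c k ω * F k ω) + w c (m + 1) ω * F (m + 1) ω :=
          Finset.sum_Icc_succ_top (Nat.succ_le_succ (Nat.zero_le m)) _
        have hFeq : F (m + 1) ω = g (m + 1) ω - g m ω := by rw [hstep]; ring
        have hw1 : w c (m + 1) ω * F (m + 1) ω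
            = T c (g (m + 1) ω) ^ (p - 1) * (g (m + 1) ω - g m ω) := by
          simp only [hwdef, hFeq]
        rw [hsum, mul_add, hw1]
        nlinarith [hkey, ih]
  -- Step 2+3+4+5: integral chain
  have hchain : ∀ c : ℝ, 0 ≤ c →
      (∫ ω, T c (g n ω) ^ p ∂μ) ≤ p * ∫ ω, w c n ω * G ω ∂μ := by
    intro c hc
    have hRHSint : Integrable (fun ω => p * ∑ k ∈ Finset.Icc 1 n, w c k ω * F k ω) μ :=
      (integrable_finset_sum _ fun k _ => hwF_int c hc k).const_mul p
    calc (∫ ω, T c (g n ω) ^ p ∂μ)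
        ≤ ∫ ω, p * ∑ k ∈ Finset.Icc 1 n, w c k ω * F k ω ∂μ :=
          integral_mono_ae (hTpow_int c hc n) hRHSint (hS1 c hc)
      _ = p * ∑ k ∈ Finset.Icc 1 n, ∫ ω, w c k ω * F k ω ∂μ := by
          rw [integral_const_mul, integral_finset_sum _ fun k _ => hwF_int c hc k]
      _ ≤ p * ∑ k ∈ Finset.Icc 1 n, ∫ ω, w c n ω * f k ω ∂μ := by
          apply mul_le_mul_of_nonneg_left _ hp0.le
          apply Finset.sum_le_sum
          intro k hk
          have hkn : k ≤ n := (Finset.mem_Icc.mp hk).2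
          -- pull-out property
          have hpull : μ[(fun ω => w c k ω * f k ω) | ℱ k] =ᵐ[μ]
              fun ω => w c k ω * F k ω := by
            have := condExp_mul_of_stronglyMeasurable_left (m := ℱ k) (μ := μ)
              (f := w c k) (g := f k) (hwmeasF c k).stronglyMeasurable
              (hwf_int c hc k k) (hfint k)
            exact this
          have heq1 : (∫ ω, w c k ω * F k ω ∂μ) = ∫ ω, w c k ω * f k ω ∂μ := by
            have h1 : (∫ ω, w c k ω * F k ω ∂μ)
                = ∫ ω, (μ[(fun ω => w c k ω * f k ω) | ℱ k]) ω ∂μ :=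
              (integral_congr_ae hpull).symm
            rw [h1, integral_condExp (ℱ.le k)]
          rw [heq1]
          -- monotonicity in the weight
          apply integral_mono_ae (hwf_int c hc k k) (hwf_int c hc n k)
          filter_upwards [hF0'] with ω hω
          have hgle : g k ω ≤ g n ω := by
            apply Finset.sum_le_sum_of_subset_of_nonneg
              (Finset.Icc_subset_Icc_right hkn)
            intro j _ _; exact hω j
          have hwle : w c k ω ≤ w c n ω := by
            apply Real.rpow_le_rpow (hT0 c _ hc) _ hp1
            exact min_le_min (max_le_max hgle le_rfl) le_rfl
          exact mul_le_mul_of_nonneg_right hwle (hnonneg k ω)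
      _ = p * ∫ ω, w c n ω * G ω ∂μ := by
          rw [← integral_finset_sum _ fun k _ => hwf_int c hc n k]
          congr 1
          apply integral_congr_ae
          refine Filter.Eventually.of_forall fun ω => ?_
          simp only [hGdef, Finset.mul_sum]
  -- B
  set B : ℝ := ∫ ω, G ω ^ p ∂μ with hBdef
  have hB0 : 0 ≤ B := integral_nonneg fun ω => Real.rpow_nonneg (hG0 ω) p
  -- Step 6+7: per-truncation bound
  have hMain : ∀ c : ℝ, 0 ≤ c →
      (∫ ω, T c (g n ω) ^ p ∂μ) ^ (1 / p) ≤ p * B ^ (1 / p) := by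
    intro c hc
    set A : ℝ := ∫ ω, T c (g n ω) ^ p ∂μ with hAdef
    have hA0 : 0 ≤ A := integral_nonneg fun ω => Real.rpow_nonneg (hT0 c _ hc) p
    rcases hp.eq_or_lt with hpeq | hplt
    · -- p = 1
      have hp_eq : p = 1 := hpeq.symm
      have hw1 : ∀ ω, w c n ω = 1 := fun ω => by
        simp only [hwdef]
        rw [show p - 1 = 0 by rw [hp_eq]; ring]
        exact Real.rpow_zero _
      have h1 := hchain c hc
      rw [← hAdef, hp_eq, one_mul] at h1
      have h2 : (∫ ω, w c n ω * G ω ∂μ) = ∫ ω, G ω ∂μ :=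
        integral_congr_ae (Filter.Eventually.of_forall fun ω => by
          simp only [hw1 ω, one_mul])
      have h3 : B = ∫ ω, G ω ∂μ := by
        rw [hBdef]
        exact integral_congr_ae (Filter.Eventually.of_forall fun ω => by
          simp only [hp_eq, Real.rpow_one])
      rw [h2] at h1
      rw [hp_eq]
      norm_num [Real.rpow_one]
      rw [h3]
      exact h1
    · -- 1 < p
      have hpq : p.HolderConjugate (p / (p - 1)) := Real.HolderConjugate.conjExponent hplt
      set q : ℝ := p / (p - 1) with hqdef
      have hq0 : 0 < q := hpq.symm.pos
      -- membership for Hölder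
      have hwmem : MemLp (w c n) (ENNReal.ofReal q) μ :=
        MemLp.of_bound (hwmeas c n).aestronglyMeasurable (c ^ (p - 1))
          (Filter.Eventually.of_forall fun ω => hwbdd c n ω hc)
      have hHolder : (∫ ω, w c n ω * G ω ∂μ)
          ≤ (∫ ω, w c n ω ^ q ∂μ) ^ (1 / q) * (∫ ω, G ω ^ p ∂μ) ^ (1 / p) :=
        integral_mul_le_Lp_mul_Lq_of_nonneg hpq.symm
          (Filter.Eventually.of_forall fun ω => Real.rpow_nonneg (hT0 c _ hc) _)
          (Filter.Eventually.of_forall hG0) hwmem hGmem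
      have hwq : (∫ ω, w c n ω ^ q ∂μ) = A := by
        apply integral_congr_ae
        refine Filter.Eventually.of_forall fun ω => ?_
        show (T c (g n ω) ^ (p - 1)) ^ q = T c (g n ω) ^ p
        rw [← Real.rpow_mul (hT0 c _ hc) (p - 1) q, hpq.sub_one_mul_conj]
      have hAB : A ≤ p * (A ^ (1 / q) * B ^ (1 / p)) := by
        calc A ≤ p * ∫ ω, w c n ω * G ω ∂μ := hchain c hc
          _ ≤ p * (A ^ (1 / q) * B ^ (1 / p)) := by
              apply mul_le_mul_of_nonneg_left _ hp0.le
              rw [← hwq, hBdef]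
              exact hHolder
      rcases hA0.eq_or_lt with hAzero | hApos
      · rw [← hAzero, Real.zero_rpow (by positivity : (1:ℝ)/p ≠ 0)]
        exact mul_nonneg hp0.le (Real.rpow_nonneg hB0 _)
      · have hsum_exp : 1 / q + 1 / p = 1 := by
          rw [one_div, one_div, add_comm]
          exact hpq.inv_add_inv_eq_one
        have hsplit : A ^ (1 / q) * A ^ (1 / p) = A := by
          rw [← Real.rpow_add hApos, hsum_exp, Real.rpow_one]
        have h1 : A ^ (1 / q) * A ^ (1 / p) ≤ A ^ (1 / q) * (p * B ^ (1 / p)) := by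
          rw [hsplit]
          calc A ≤ p * (A ^ (1 / q) * B ^ (1 / p)) := hAB
            _ = A ^ (1 / q) * (p * B ^ (1 / p)) := by ring
        exact le_of_mul_le_mul_left h1 (Real.rpow_pos_of_pos hApos _)
  -- Step 8: Monotone convergence and wrap-up in ℝ≥0∞
  have hg_n_nonneg : ∀ᵐ ω ∂μ, 0 ≤ g n ω := by
    filter_upwards [hF0'] with ω hω
    exact Finset.sum_nonneg fun j _ => hω j
  -- pnorm of G
  have hGp_int : Integrable (fun ω => G ω ^ p) μ := by
    have h1 := hGmem.norm_rpow (ENNReal.ofReal_pos.mpr hp0).ne' ENNReal.ofReal_ne_top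
    rw [memLp_one_iff_integrable] at h1
    apply h1.congr
    refine Filter.Eventually.of_forall fun ω => ?_
    show ‖G ω‖ ^ (ENNReal.ofReal p).toReal = G ω ^ p
    rw [Real.norm_of_nonneg (hG0 ω), ENNReal.toReal_ofReal hp0.le]
  have hBenn : (∫⁻ ω, ENNReal.ofReal |G ω| ^ p ∂μ) = ENNReal.ofReal B := by
    calc (∫⁻ ω, ENNReal.ofReal |G ω| ^ p ∂μ)
        = ∫⁻ ω, ENNReal.ofReal (G ω ^ p) ∂μ := by
          refine lintegral_congr fun ω => ?_
          show ENNReal.ofReal |G ω| ^ p = ENNReal.ofReal (G ω ^ p)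
          rw [abs_of_nonneg (hG0 ω), ENNReal.ofReal_rpow_of_nonneg (hG0 ω) hp0.le]
      _ = ENNReal.ofReal B := (ofReal_integral_eq_lintegral_ofReal hGp_int
          (Filter.Eventually.of_forall fun ω => Real.rpow_nonneg (hG0 ω) p)).symm
  have hpnormG : pnorm μ p G = ENNReal.ofReal (B ^ (1 / p)) := by
    unfold pnorm
    rw [hBenn, ← ENNReal.ofReal_rpow_of_nonneg hB0 (by positivity : (0:ℝ) ≤ 1 / p)]
  -- LHS via monotone convergence
  have hsup : (∫⁻ ω, ENNReal.ofReal |g n ω| ^ p ∂μ)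
      = ⨆ N : ℕ, ENNReal.ofReal (∫ ω, T (N : ℝ) (g n ω) ^ p ∂μ) := by
    have hTmono : ∀ ω, Monotone fun N : ℕ => ENNReal.ofReal (T (N : ℝ) (g n ω) ^ p) := by
      intro ω N M hNM
      apply ENNReal.ofReal_le_ofReal
      apply Real.rpow_le_rpow (hT0 _ _ (Nat.cast_nonneg N)) _ hp0.le
      exact min_le_min le_rfl (Nat.cast_le.mpr hNM)
    calc (∫⁻ ω, ENNReal.ofReal |g n ω| ^ p ∂μ)
        = ∫⁻ ω, ⨆ N : ℕ, ENNReal.ofReal (T (N : ℝ) (g n ω) ^ p) ∂μ := by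
          apply lintegral_congr_ae
          filter_upwards [hg_n_nonneg] with ω hω
          show ENNReal.ofReal |g n ω| ^ p
            = ⨆ N : ℕ, ENNReal.ofReal (T (N : ℝ) (g n ω) ^ p)
          rw [abs_of_nonneg hω, ENNReal.ofReal_rpow_of_nonneg hω hp0.le]
          apply le_antisymm
          · have hTeq : T ((⌈g n ω⌉₊ : ℕ) : ℝ) (g n ω) = g n ω := by
              simp only [hTdef]
              rw [max_eq_left hω, min_eq_left (Nat.le_ceil (g n ω))]
            exact le_iSup_of_le ⌈g n ω⌉₊ (le_of_eq (by rw [hTeq]))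
          · apply iSup_le
            intro N
            apply ENNReal.ofReal_le_ofReal
            apply Real.rpow_le_rpow (hT0 _ _ (Nat.cast_nonneg N)) _ hp0.le
            calc T (N : ℝ) (g n ω) ≤ max (g n ω) 0 := min_le_left _ _
              _ = g n ω := max_eq_left hω
      _ = ⨆ N : ℕ, ∫⁻ ω, ENNReal.ofReal (T (N : ℝ) (g n ω) ^ p) ∂μ := by
          apply lintegral_iSup'
          · intro N
            exact (ENNReal.measurable_ofReal.comp ((hrpow_meas p hp0.le).comp
              (((hgmeas n).max measurable_const).min measurable_const))).aemeasurable
          · exact Filter.Eventually.of_forall hTmono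
      _ = ⨆ N : ℕ, ENNReal.ofReal (∫ ω, T (N : ℝ) (g n ω) ^ p ∂μ) := by
          congr 1
          funext N
          exact (ofReal_integral_eq_lintegral_ofReal (hTpow_int _ (Nat.cast_nonneg N) n)
            (Filter.Eventually.of_forall fun ω =>
              Real.rpow_nonneg (hT0 _ _ (Nat.cast_nonneg N)) p)).symm
  -- final computation
  show pnorm μ p (g n) ≤ ENNReal.ofReal p * pnorm μ p G
  have hfinal : ∀ N : ℕ, (∫ ω, T (N : ℝ) (g n ω) ^ p ∂μ) ≤ (p * B ^ (1 / p)) ^ p := by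
    intro N
    set A : ℝ := ∫ ω, T (N : ℝ) (g n ω) ^ p ∂μ with hAdef
    have hA0 : 0 ≤ A := integral_nonneg fun ω =>
      Real.rpow_nonneg (hT0 _ _ (Nat.cast_nonneg N)) p
    have h1 : A ^ (1 / p) ≤ p * B ^ (1 / p) := hMain _ (Nat.cast_nonneg N)
    calc A = (A ^ (1 / p)) ^ p := by
          rw [← Real.rpow_mul hA0, one_div_mul_cancel hp0.ne', Real.rpow_one]
      _ ≤ (p * B ^ (1 / p)) ^ p :=
          Real.rpow_le_rpow (Real.rpow_nonneg hA0 _) h1 hp0.le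
  have hX0 : (0:ℝ) ≤ p * B ^ (1 / p) := mul_nonneg hp0.le (Real.rpow_nonneg hB0 _)
  calc pnorm μ p (g n)
      = (⨆ N : ℕ, ENNReal.ofReal (∫ ω, T (N : ℝ) (g n ω) ^ p ∂μ)) ^ (1 / p) := by
        unfold pnorm
        rw [hsup]
    _ ≤ (ENNReal.ofReal ((p * B ^ (1 / p)) ^ p)) ^ (1 / p) := by
        apply ENNReal.rpow_le_rpow _ (by positivity)
        exact iSup_le fun N => ENNReal.ofReal_le_ofReal (hfinal N)
    _ = ENNReal.ofReal (p * B ^ (1 / p)) := by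
        rw [← ENNReal.ofReal_rpow_of_nonneg hX0 hp0.le, ← ENNReal.rpow_mul,
          mul_one_div_cancel hp0.ne', ENNReal.rpow_one]
    _ = ENNReal.ofReal p * pnorm μ p G := by
        rw [ENNReal.ofReal_mul hp0.le, hpnormG]
end

section
/- Let 2 ≤ p ≤ 4 and let f be a bounded measurable real-valued function on a probability space. Then for each N ≥ 2, ‖s_N(f)‖_p ≤ √(p/2) · ‖S_N(f)‖_p. (Commutative case of the paper's Corollary 1.3, second inequality.) -/
open MeasureTheory Finset
open scoped ENNReal

lemma aux_rpow_mul_self {q x : ℝ} (hq : 1 ≤ q) (hx : 0 ≤ x) : x ^ q = x ^ (q - 1) * x := by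
  rcases eq_or_lt_of_le hx with h0 | hx0
  · rw [← h0]
    rw [Real.zero_rpow (by linarith), mul_zero]
  · rw [← Real.rpow_add_one hx0.ne', sub_add_cancel]

lemma aux_tangent {q x y : ℝ} (hq : 1 ≤ q) (hy : 0 ≤ y) (hxy : y ≤ x) :
    x ^ q - y ^ q ≤ q * x ^ (q - 1) * (x - y) := by
  have hx : 0 ≤ x := hy.trans hxy
  rcases eq_or_lt_of_le hx with h0 | hx0
  · have hy0 : y = 0 := le_antisymm (by linarith) hy
    rw [← h0, hy0]
    simp
  · set t := y / x with ht
    have hxt : x * t = y := by rw [ht, mul_comm, div_mul_cancel₀ y hx0.ne']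
    have ht0 : 0 ≤ t := div_nonneg hy hx0.le
    have hb := one_add_mul_self_le_rpow_one_add (s := t - 1) (by linarith) hq
    rw [add_sub_cancel] at hb
    have hxq : 0 ≤ x ^ q := Real.rpow_nonneg hx0.le q
    have h1 : x ^ q * (1 + q * (t - 1)) ≤ x ^ q * t ^ q :=
      mul_le_mul_of_nonneg_left hb hxq
    have h5 : x ^ q * (1 + q * (t - 1)) = x ^ q + q * (x ^ q * t) - q * x ^ q := by ring
    have h2 : x ^ q * t ^ q = y ^ q := by
      rw [← Real.mul_rpow hx0.le ht0, hxt]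
    have h3 : x ^ q * t = x ^ (q - 1) * y := by
      rw [aux_rpow_mul_self hq hx, mul_assoc, hxt]
    rw [h5, h2, h3] at h1
    have h4 : x ^ (q - 1) * x = x ^ q := (aux_rpow_mul_self hq hx).symm
    have h6 : q * x ^ (q - 1) * (x - y) = q * (x ^ (q - 1) * x) - q * (x ^ (q - 1) * y) := by ring
    rw [h6, h4]
    linarith [h1]

lemma aux_integrable {Ω : Type*} {m0 : MeasurableSpace Ω} {μ : Measure Ω} [IsFiniteMeasure μ]
    {g : Ω → ℝ} (hg : AEStronglyMeasurable g μ) {K : ℝ} (h : ∀ᵐ ω ∂μ, |g ω| ≤ K) :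
    Integrable g μ :=
  (integrable_const K).mono' hg (by simpa [Real.norm_eq_abs] using h)

lemma dual_doob {Ω : Type*} {m0 : MeasurableSpace Ω} (μ : Measure Ω) [IsProbabilityMeasure μ]
    (ℱ : Filtration ℕ m0) {q : ℝ} (hq : 1 ≤ q) (N : ℕ) (hN : 2 ≤ N)
    (u : ℕ → Ω → ℝ) {K : ℝ} (hK : 0 ≤ K)
    (hu_sm : ∀ k, 1 ≤ k → StronglyMeasurable[ℱ k] (u k))
    (hu_nonneg : ∀ k ω, 0 ≤ u k ω)
    (hu_bdd : ∀ k, ∀ᵐ ω ∂μ, u k ω ≤ K) :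
    ∫⁻ ω, ENNReal.ofReal (u 1 ω + ∑ k ∈ Icc 2 N, (μ[u k | ℱ (k - 1)]) ω) ^ q ∂μ
      ≤ ENNReal.ofReal (q ^ q) * ∫⁻ ω, ENNReal.ofReal (u 1 ω + ∑ k ∈ Icc 2 N, u k ω) ^ q ∂μ := by
  have hq0 : (0:ℝ) < q := lt_of_lt_of_le one_pos hq
  have hq1' : (0:ℝ) ≤ q - 1 := by linarith
  set v : ℕ → Ω → ℝ := fun k => μ[u k | ℱ (k - 1)] with hv_def
  set A : ℕ → Ω → ℝ := fun n ω => u 1 ω + ∑ k ∈ Icc 2 n, v k ω with hA_def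
  set B : Ω → ℝ := fun ω => u 1 ω + ∑ k ∈ Icc 2 N, u k ω with hB_def
  show ∫⁻ ω, ENNReal.ofReal (A N ω) ^ q ∂μ
    ≤ ENNReal.ofReal (q ^ q) * ∫⁻ ω, ENNReal.ofReal (B ω) ^ q ∂μ
  -- basic facts
  have hu_meas : ∀ k, 1 ≤ k → Measurable (u k) :=
    fun k hk => ((hu_sm k hk).mono (ℱ.le k)).measurable
  have hu_abs : ∀ k, ∀ᵐ ω ∂μ, |u k ω| ≤ K := fun k =>
    (hu_bdd k).mono fun ω h => by rw [abs_of_nonneg (hu_nonneg k ω)]; exact h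
  have hu_int : ∀ k, 1 ≤ k → Integrable (u k) μ :=
    fun k hk => aux_integrable (hu_meas k hk).aestronglyMeasurable (hu_abs k)
  have hv_int : ∀ k, Integrable (v k) μ := fun k => integrable_condExp
  have hv_bdd : ∀ k, ∀ᵐ ω ∂μ, |v k ω| ≤ K := by
    intro k
    have h := ae_bdd_condExp_of_ae_bdd (m := ℱ (k-1)) (R := ⟨K, hK⟩) (hu_abs k)
    exact h
  have hv_nonneg : ∀ k, ∀ᵐ ω ∂μ, 0 ≤ v k ω := by
    intro k
    have h := condExp_nonneg (m := ℱ (k-1)) (μ := μ)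
      (Filter.Eventually.of_forall (hu_nonneg k)) (E := ℝ)
    exact h
  have hv_meas : ∀ k, Measurable (v k) :=
    fun k => (stronglyMeasurable_condExp.mono (ℱ.le (k-1))).measurable
  have hA_meas : ∀ n, Measurable (A n) := by
    intro n
    exact (hu_meas 1 le_rfl).add (Finset.measurable_sum _ fun k _ => hv_meas k)
  -- good set
  have hgood : ∀ᵐ ω ∂μ, ∀ k, 0 ≤ v k ω ∧ v k ω ≤ K ∧ u k ω ≤ K := by
    rw [ae_all_iff]
    intro k
    filter_upwards [hv_nonneg k, hv_bdd k, hu_bdd k] with ω h1 h2 h3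
    exact ⟨h1, (abs_le.mp h2).2, h3⟩
  -- pointwise consequences on the good set
  have hA_nonneg : ∀ ω, (∀ k, 0 ≤ v k ω ∧ v k ω ≤ K ∧ u k ω ≤ K) → ∀ n, 0 ≤ A n ω :=
    fun ω hω n => add_nonneg (hu_nonneg 1 ω) (Finset.sum_nonneg fun k _ => (hω k).1)
  have hA_mono : ∀ ω, (∀ k, 0 ≤ v k ω ∧ v k ω ≤ K ∧ u k ω ≤ K) →
      ∀ m n, m ≤ n → A m ω ≤ A n ω := by
    intro ω hω m n hmn
    exact add_le_add_right (Finset.sum_le_sum_of_subset_of_nonneg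
      (Finset.Icc_subset_Icc_right hmn) (fun k _ _ => (hω k).1)) _
  set M : ℝ := K * (N + 1) with hM_def
  have hM0 : 0 ≤ M := by positivity
  have hA_bdd : ∀ ω, (∀ k, 0 ≤ v k ω ∧ v k ω ≤ K ∧ u k ω ≤ K) → ∀ n, n ≤ N → A n ω ≤ M := by
    intro ω hω n hn
    have h1 : ∑ k ∈ Icc 2 n, v k ω ≤ ∑ k ∈ Icc 2 n, K :=
      Finset.sum_le_sum fun k _ => (hω k).2.1
    have h2 : ∑ k ∈ Icc 2 n, (K:ℝ) = ((Icc 2 n).card : ℝ) * K := by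
      rw [Finset.sum_const, nsmul_eq_mul]
    have h3 : ((Icc 2 n).card : ℝ) ≤ (N : ℝ) := by
      have : (Icc 2 n).card ≤ N := by rw [Nat.card_Icc]; omega
      exact_mod_cast this
    have h4 : u 1 ω ≤ K := (hω 1).2.2
    have h5 : ((Icc 2 n).card : ℝ) * K ≤ (N:ℝ) * K := mul_le_mul_of_nonneg_right h3 hK
    rw [hM_def]
    calc A n ω = u 1 ω + ∑ k ∈ Icc 2 n, v k ω := rfl
      _ ≤ K + (N:ℝ) * K := by rw [h2] at h1; linarith
      _ = K * (N + 1) := by ring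
  have hB_nonneg : ∀ ω, 0 ≤ B ω :=
    fun ω => add_nonneg (hu_nonneg 1 ω) (Finset.sum_nonneg fun k _ => hu_nonneg k ω)
  have hB_bdd : ∀ ω, (∀ k, 0 ≤ v k ω ∧ v k ω ≤ K ∧ u k ω ≤ K) → B ω ≤ M := by
    intro ω hω
    have h1 : ∑ k ∈ Icc 2 N, u k ω ≤ ∑ k ∈ Icc 2 N, K :=
      Finset.sum_le_sum fun k _ => (hω k).2.2
    have h2 : ∑ k ∈ Icc 2 N, (K:ℝ) = ((Icc 2 N).card : ℝ) * K := by
      rw [Finset.sum_const, nsmul_eq_mul]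
    have h3 : ((Icc 2 N).card : ℝ) ≤ (N : ℝ) := by
      have : (Icc 2 N).card ≤ N := by rw [Nat.card_Icc]; omega
      exact_mod_cast this
    have h5 : ((Icc 2 N).card : ℝ) * K ≤ (N:ℝ) * K := mul_le_mul_of_nonneg_right h3 hK
    have h4 : u 1 ω ≤ K := (hω 1).2.2
    rw [hM_def]
    calc B ω = u 1 ω + ∑ k ∈ Icc 2 N, u k ω := rfl
      _ ≤ K + (N:ℝ) * K := by rw [h2] at h1; linarith
      _ = K * (N + 1) := by ring
  set M1 : ℝ := max M 1 with hM1_def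
  have hM1_pos : (0:ℝ) < M1 := lt_of_lt_of_le one_pos (le_max_right _ _)
  have hApow_bdd : ∀ n, n ≤ N → ∀ r : ℝ, 0 ≤ r → ∀ᵐ ω ∂μ, |A n ω ^ r| ≤ M1 ^ r := by
    intro n hn r hr
    filter_upwards [hgood] with ω hω
    calc |A n ω ^ r| ≤ |A n ω| ^ r := Real.abs_rpow_le_abs_rpow _ _
      _ ≤ M1 ^ r := by
        apply Real.rpow_le_rpow (abs_nonneg _) _ hr
        rw [abs_of_nonneg (hA_nonneg ω hω n)]
        exact le_trans (hA_bdd ω hω n hn) (le_max_left _ _)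
  have hApow_meas : ∀ n (r : ℝ), Measurable fun ω => A n ω ^ r :=
    fun n r => (hA_meas n).pow measurable_const
  have hint1 : ∀ n, n ≤ N → ∀ r : ℝ, 0 ≤ r → Integrable (fun ω => A n ω ^ r) μ :=
    fun n hn r hr => aux_integrable (hApow_meas n r).aestronglyMeasurable (hApow_bdd n hn r hr)
  have hint2 : ∀ n, n ≤ N → ∀ r : ℝ, 0 ≤ r → ∀ k, 1 ≤ k →
      Integrable (fun ω => A n ω ^ r * u k ω) μ := by
    intro n hn r hr k hk
    apply aux_integrable ((hApow_meas n r).mul (hu_meas k hk)).aestronglyMeasurable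
      (K := M1 ^ r * K)
    filter_upwards [hApow_bdd n hn r hr, hu_abs k] with ω h1 h2
    calc |A n ω ^ r * u k ω| = |A n ω ^ r| * |u k ω| := abs_mul _ _
      _ ≤ M1 ^ r * K := mul_le_mul h1 h2 (abs_nonneg _) (Real.rpow_nonneg hM1_pos.le r)
  have hint3 : ∀ n, n ≤ N → ∀ r : ℝ, 0 ≤ r → ∀ k,
      Integrable (fun ω => A n ω ^ r * v k ω) μ := by
    intro n hn r hr k
    apply aux_integrable ((hApow_meas n r).mul (hv_meas k)).aestronglyMeasurable
      (K := M1 ^ r * K)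
    filter_upwards [hApow_bdd n hn r hr, hv_bdd k] with ω h1 h2
    calc |A n ω ^ r * v k ω| = |A n ω ^ r| * |v k ω| := abs_mul _ _
      _ ≤ M1 ^ r * K := mul_le_mul h1 h2 (abs_nonneg _) (Real.rpow_nonneg hM1_pos.le r)
  -- successor identity
  have hA_succ : ∀ n, 1 ≤ n → ∀ ω, A (n+1) ω = A n ω + v (n+1) ω := by
    intro n hn ω
    have hins : insert (n+1) (Icc 2 n) = Icc 2 (n+1) := Finset.insert_Icc_right_eq_Icc_add_one (by omega)
    show u 1 ω + ∑ k ∈ Icc 2 (n+1), v k ω = (u 1 ω + ∑ k ∈ Icc 2 n, v k ω) + v (n+1) ω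
    rw [← hins, Finset.sum_insert (by simp)]
    ring
  -- pull-out property
  have hpull : ∀ n, 1 ≤ n → n + 1 ≤ N →
      ∫ ω, A (n+1) ω ^ (q-1) * v (n+1) ω ∂μ = ∫ ω, A (n+1) ω ^ (q-1) * u (n+1) ω ∂μ := by
    intro n hn hnN
    have hsmA : StronglyMeasurable[ℱ n] (A (n+1)) := by
      apply StronglyMeasurable.add
      · exact (hu_sm 1 le_rfl).mono (ℱ.mono (by omega))
      · apply Finset.stronglyMeasurable_fun_sum
        intro k hk
        rw [Finset.mem_Icc] at hk
        exact stronglyMeasurable_condExp.mono (ℱ.mono (by omega))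
    have hsm : StronglyMeasurable[ℱ n] (fun ω => A (n+1) ω ^ (q-1)) :=
      (hsmA.measurable.pow measurable_const).stronglyMeasurable
    have hbd : ∀ᵐ ω ∂μ, ‖A (n+1) ω ^ (q-1)‖ ≤ M1 ^ (q-1) := by
      simpa [Real.norm_eq_abs] using hApow_bdd (n+1) hnN (q-1) hq1'
    have hpo := condExp_stronglyMeasurable_mul_of_bound (ℱ.le n) hsm
      (hu_int (n+1) (by omega)) (M1 ^ (q-1)) hbd
    have hv1 : v (n+1) = μ[u (n+1) | ℱ n] := by rw [hv_def]; simp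
    calc ∫ ω, A (n+1) ω ^ (q-1) * v (n+1) ω ∂μ
        = ∫ ω, ((fun ω' => A (n+1) ω' ^ (q-1)) * μ[u (n+1) | ℱ n]) ω ∂μ := by
          rw [hv1]; rfl
      _ = ∫ ω, (μ[(fun ω' => A (n+1) ω' ^ (q-1)) * u (n+1) | ℱ n]) ω ∂μ :=
          (integral_congr_ae hpo).symm
      _ = ∫ ω, A (n+1) ω ^ (q-1) * u (n+1) ω ∂μ := integral_condExp (ℱ.le n)
  -- the key induction
  have key : ∀ n, 1 ≤ n → n ≤ N →
      ∫ ω, A n ω ^ q ∂μ ≤ ∫ ω, A n ω ^ (q-1) * u 1 ω ∂μ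
        + q * ∑ k ∈ Icc 2 n, ∫ ω, A n ω ^ (q-1) * u k ω ∂μ := by
    intro n
    induction n with
    | zero => omega
    | succ m ih =>
      intro _ hmN
      rcases Nat.lt_or_ge m 1 with hm0 | hm1
      · -- base case : m = 0, n = 1
        have hm : m = 0 := by omega
        subst hm
        have hIcc : Icc 2 1 = (∅ : Finset ℕ) := Finset.Icc_eq_empty (by omega)
        rw [hIcc]
        simp only [Finset.sum_empty, mul_zero, add_zero]
        apply le_of_eq
        apply integral_congr_ae
        filter_upwards with ω
        have hA1 : A 1 ω = u 1 ω := by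
          show u 1 ω + ∑ k ∈ Icc 2 1, v k ω = u 1 ω
          rw [hIcc, Finset.sum_empty, add_zero]
        rw [hA1, aux_rpow_mul_self hq (hu_nonneg 1 ω)]
      · -- inductive step, m ≥ 1
        have hmN' : m ≤ N := by omega
        have IH := ih hm1 hmN'
        -- difference estimate
        have hdiff : ∫ ω, A (m+1) ω ^ q ∂μ - ∫ ω, A m ω ^ q ∂μ
            ≤ q * ∫ ω, A (m+1) ω ^ (q-1) * v (m+1) ω ∂μ := by
          rw [← integral_sub (hint1 (m+1) hmN q hq0.le) (hint1 m hmN' q hq0.le),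
            ← integral_const_mul]
          apply integral_mono_ae
            ((hint1 (m+1) hmN q hq0.le).sub (hint1 m hmN' q hq0.le))
            ((hint3 (m+1) hmN (q-1) hq1' (m+1)).const_mul q)
          filter_upwards [hgood] with ω hω
          have htan := aux_tangent hq (hA_nonneg ω hω m) (hA_mono ω hω m (m+1) (Nat.le_succ m))
          have heq : A (m+1) ω - A m ω = v (m+1) ω := by rw [hA_succ m hm1 ω]; ring
          calc A (m+1) ω ^ q - A m ω ^ q ≤ q * A (m+1) ω ^ (q-1) * (A (m+1) ω - A m ω) := htan
            _ = q * (A (m+1) ω ^ (q-1) * v (m+1) ω) := by rw [heq]; ring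
        -- upgrade the IH terms from A m to A (m+1)
        have hupg : ∀ k, 1 ≤ k → ∫ ω, A m ω ^ (q-1) * u k ω ∂μ
            ≤ ∫ ω, A (m+1) ω ^ (q-1) * u k ω ∂μ := by
          intro k hk
          apply integral_mono_ae (hint2 m hmN' (q-1) hq1' k hk) (hint2 (m+1) hmN (q-1) hq1' k hk)
          filter_upwards [hgood] with ω hω
          apply mul_le_mul_of_nonneg_right _ (hu_nonneg k ω)
          exact Real.rpow_le_rpow (hA_nonneg ω hω m) (hA_mono ω hω m (m+1) (Nat.le_succ m)) hq1'
        have hsum_upg : ∑ k ∈ Icc 2 m, ∫ ω, A m ω ^ (q-1) * u k ω ∂μ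
            ≤ ∑ k ∈ Icc 2 m, ∫ ω, A (m+1) ω ^ (q-1) * u k ω ∂μ := by
          apply Finset.sum_le_sum
          intro k hk
          rw [Finset.mem_Icc] at hk
          exact hupg k (by omega)
        have hpull' := hpull m hm1 hmN
        have hins : insert (m+1) (Icc 2 m) = Icc 2 (m+1) := Finset.insert_Icc_right_eq_Icc_add_one (by omega)
        rw [← hins, Finset.sum_insert (by simp)]
        have hu1 := hupg 1 le_rfl
        calc ∫ ω, A (m+1) ω ^ q ∂μ
            = (∫ ω, A (m+1) ω ^ q ∂μ - ∫ ω, A m ω ^ q ∂μ) + ∫ ω, A m ω ^ q ∂μ := by ring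
          _ ≤ q * ∫ ω, A (m+1) ω ^ (q-1) * u (m+1) ω ∂μ
              + (∫ ω, A m ω ^ (q-1) * u 1 ω ∂μ
                + q * ∑ k ∈ Icc 2 m, ∫ ω, A m ω ^ (q-1) * u k ω ∂μ) := by
              rw [hpull'] at hdiff
              linarith [hdiff, IH]
          _ ≤ ∫ ω, A (m+1) ω ^ (q-1) * u 1 ω ∂μ
              + q * (∫ ω, A (m+1) ω ^ (q-1) * u (m+1) ω ∂μ
                + ∑ k ∈ Icc 2 m, ∫ ω, A (m+1) ω ^ (q-1) * u k ω ∂μ) := by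
              have := mul_le_mul_of_nonneg_left hsum_upg hq0.le
              linarith [hu1, this]
  have hB_meas : Measurable B :=
    (hu_meas 1 le_rfl).add (Finset.measurable_sum _ fun k hk => by
      rw [Finset.mem_Icc] at hk; exact hu_meas k (by omega))
  have hkey := key N (by omega) le_rfl
  have hsplit : ∫ ω, A N ω ^ (q-1) * B ω ∂μ
      = ∫ ω, A N ω ^ (q-1) * u 1 ω ∂μ + ∑ k ∈ Icc 2 N, ∫ ω, A N ω ^ (q-1) * u k ω ∂μ := by
    have h1 : (fun ω => A N ω ^ (q-1) * B ω)
        = fun ω => A N ω ^ (q-1) * u 1 ω + ∑ k ∈ Icc 2 N, A N ω ^ (q-1) * u k ω := by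
      funext ω
      show A N ω ^ (q-1) * (u 1 ω + ∑ k ∈ Icc 2 N, u k ω) = _
      rw [mul_add, Finset.mul_sum]
    rw [h1, integral_add (hint2 N le_rfl (q-1) hq1' 1 le_rfl)
      (integrable_finset_sum _ (fun k hk => by
        rw [Finset.mem_Icc] at hk; exact hint2 N le_rfl (q-1) hq1' k (by omega))),
      integral_finset_sum _ (fun k hk => by
        rw [Finset.mem_Icc] at hk; exact hint2 N le_rfl (q-1) hq1' k (by omega))]
  have hT_first_nonneg : 0 ≤ ∫ ω, A N ω ^ (q-1) * u 1 ω ∂μ := by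
    apply integral_nonneg_of_ae
    filter_upwards [hgood] with ω hω
    exact mul_nonneg (Real.rpow_nonneg (hA_nonneg ω hω N) _) (hu_nonneg 1 ω)
  have hmain : ∫ ω, A N ω ^ q ∂μ ≤ q * ∫ ω, A N ω ^ (q-1) * B ω ∂μ := by
    rw [hsplit, mul_add]
    have h2 : ∫ ω, A N ω ^ (q-1) * u 1 ω ∂μ ≤ q * ∫ ω, A N ω ^ (q-1) * u 1 ω ∂μ :=
      le_mul_of_one_le_left hT_first_nonneg hq
    linarith [hkey]

  have hreal : ∫ ω, A N ω ^ q ∂μ ≤ q ^ q * ∫ ω, B ω ^ q ∂μ := by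
    rcases eq_or_lt_of_le hq with hq_eq | hq_gt
    · -- q = 1
      rw [← hq_eq] at hmain ⊢
      simp only [sub_self, Real.rpow_zero, one_mul, Real.rpow_one, Real.one_rpow] at hmain ⊢
      exact hmain
    · set I := ∫ ω, A N ω ^ q ∂μ with hI_def
      set J := ∫ ω, B ω ^ q ∂μ with hJ_def
      have hI0 : 0 ≤ I := integral_nonneg_of_ae (by
        filter_upwards [hgood] with ω hω
        exact Real.rpow_nonneg (hA_nonneg ω hω N) q)
      have hJ0 : 0 ≤ J := integral_nonneg fun ω => Real.rpow_nonneg (hB_nonneg ω) q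
      have hqne : q - 1 ≠ 0 := by linarith
      have hpq : (q/(q-1)).HolderConjugate q :=
        Real.holderConjugate_comm.mp ((Real.holderConjugate_iff_eq_conjExponent hq_gt).mpr rfl)
      have hfmem : MemLp (fun ω => A N ω ^ (q-1)) (ENNReal.ofReal (q/(q-1))) μ := by
        apply MemLp.mono_exponent _ le_top
        exact memLp_top_of_bound (hApow_meas N (q-1)).aestronglyMeasurable (M1 ^ (q-1))
          (by simpa [Real.norm_eq_abs] using hApow_bdd N le_rfl (q-1) hq1')
      have hgmem : MemLp B (ENNReal.ofReal q) μ := by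
        apply MemLp.mono_exponent _ le_top
        apply memLp_top_of_bound hB_meas.aestronglyMeasurable M
        filter_upwards [hgood] with ω hω
        rw [Real.norm_eq_abs, abs_of_nonneg (hB_nonneg ω)]
        exact hB_bdd ω hω
      have hf_nn : (0 : Ω → ℝ) ≤ᵐ[μ] fun ω => A N ω ^ (q-1) := by
        filter_upwards [hgood] with ω hω
        simpa using Real.rpow_nonneg (hA_nonneg ω hω N) (q-1)
      have hg_nn : (0 : Ω → ℝ) ≤ᵐ[μ] B := by
        filter_upwards with ω
        simpa using hB_nonneg ω
      have hHold := integral_mul_le_Lp_mul_Lq_of_nonneg hpq hf_nn hg_nn hfmem hgmem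
      have hfix : ∫ ω, (A N ω ^ (q-1)) ^ (q/(q-1)) ∂μ = I := by
        apply integral_congr_ae
        filter_upwards [hgood] with ω hω
        rw [← Real.rpow_mul (hA_nonneg ω hω N)]
        congr 1
        field_simp
      rw [hfix, one_div_div] at hHold
      rcases eq_or_lt_of_le hI0 with hIz | hIpos
      · rw [← hIz]
        exact mul_nonneg (Real.rpow_nonneg hq0.le q) hJ0
      · have hXpos : 0 < I ^ ((q-1)/q) := Real.rpow_pos_of_pos hIpos _
        have step1 : I ≤ q * (I ^ ((q-1)/q) * J ^ (1/q)) :=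
          le_trans hmain (mul_le_mul_of_nonneg_left hHold hq0.le)
        have step2 : I ^ ((q-1)/q) * I ^ (1/q) ≤ I ^ ((q-1)/q) * (q * J ^ (1/q)) := by
          have hId : I ^ ((q-1)/q) * I ^ (1/q) = I := by
            rw [← Real.rpow_add hIpos]
            have : (q-1)/q + 1/q = 1 := by field_simp; ring
            rw [this, Real.rpow_one]
          rw [hId]
          calc I ≤ q * (I ^ ((q-1)/q) * J ^ (1/q)) := step1
            _ = I ^ ((q-1)/q) * (q * J ^ (1/q)) := by ring
        have step3 : I ^ (1/q) ≤ q * J ^ (1/q) := (mul_le_mul_iff_right₀ hXpos).mp step2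
        have step4 : I = (I ^ (1/q)) ^ q := by
          rw [← Real.rpow_mul hI0, one_div_mul_cancel hq0.ne', Real.rpow_one]
        rw [step4]
        calc (I ^ (1/q)) ^ q ≤ (q * J ^ (1/q)) ^ q :=
            Real.rpow_le_rpow (Real.rpow_nonneg hI0 _) step3 hq0.le
          _ = q ^ q * (J ^ (1/q)) ^ q := Real.mul_rpow hq0.le (Real.rpow_nonneg hJ0 _)
          _ = q ^ q * J := by rw [← Real.rpow_mul hJ0, one_div_mul_cancel hq0.ne', Real.rpow_one]
  -- convert to lintegrals
  have hG_int : Integrable (fun ω => A N ω ^ q) μ := hint1 N le_rfl q hq0.le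
  have hH_int : Integrable (fun ω => B ω ^ q) μ := by
    apply aux_integrable ((hB_meas.pow measurable_const)).aestronglyMeasurable (K := M1 ^ q)
    filter_upwards [hgood] with ω hω
    calc |B ω ^ q| ≤ |B ω| ^ q := Real.abs_rpow_le_abs_rpow _ _
      _ ≤ M1 ^ q := by
        apply Real.rpow_le_rpow (abs_nonneg _) _ hq0.le
        rw [abs_of_nonneg (hB_nonneg ω)]
        exact le_trans (hB_bdd ω hω) (le_max_left _ _)
  have e1 : ∫⁻ ω, ENNReal.ofReal (A N ω) ^ q ∂μ = ∫⁻ ω, ENNReal.ofReal (A N ω ^ q) ∂μ := by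
    apply lintegral_congr_ae
    filter_upwards [hgood] with ω hω
    rw [ENNReal.ofReal_rpow_of_nonneg (hA_nonneg ω hω N) hq0.le]
  have e2 : ∫⁻ ω, ENNReal.ofReal (B ω) ^ q ∂μ = ∫⁻ ω, ENNReal.ofReal (B ω ^ q) ∂μ := by
    apply lintegral_congr_ae
    filter_upwards with ω
    rw [ENNReal.ofReal_rpow_of_nonneg (hB_nonneg ω) hq0.le]
  have nn1 : (0 : Ω → ℝ) ≤ᵐ[μ] fun ω => A N ω ^ q := by
    filter_upwards [hgood] with ω hω
    simpa using Real.rpow_nonneg (hA_nonneg ω hω N) q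
  have nn2 : (0 : Ω → ℝ) ≤ᵐ[μ] fun ω => B ω ^ q := by
    filter_upwards with ω
    simpa using Real.rpow_nonneg (hB_nonneg ω) q
  rw [e1, e2, ← ofReal_integral_eq_lintegral_ofReal hG_int nn1,
    ← ofReal_integral_eq_lintegral_ofReal hH_int nn2,
    ← ENNReal.ofReal_mul (by positivity : (0:ℝ) ≤ q ^ q)]
  exact ENNReal.ofReal_le_ofReal hreal

/-- The martingale square function at level `N`:
`S_N(f) = ((E[f|ℱ_1])² + ∑_{k=2}^N (E[f|ℱ_k] − E[f|ℱ_{k−1}])²)^{1/2}`. -/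
noncomputable def sqFn {Ω : Type*} {m0 : MeasurableSpace Ω} (μ : Measure Ω)
    (ℱ : Filtration ℕ m0) (f : Ω → ℝ) (N : ℕ) (ω : Ω) : ℝ :=
  Real.sqrt (((μ[f | ℱ 1]) ω) ^ 2 +
    ∑ k ∈ Finset.Icc 2 N, ((μ[f | ℱ k]) ω - (μ[f | ℱ (k - 1)]) ω) ^ 2)

/-- The conditioned martingale square function at level `N`:
`s_N(f) = ((E[f|ℱ_1])² + ∑_{k=2}^N E[(E[f|ℱ_k] − E[f|ℱ_{k−1}])² | ℱ_{k−1}])^{1/2}`. -/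
noncomputable def condSqFn {Ω : Type*} {m0 : MeasurableSpace Ω} (μ : Measure Ω)
    (ℱ : Filtration ℕ m0) (f : Ω → ℝ) (N : ℕ) (ω : Ω) : ℝ :=
  Real.sqrt (((μ[f | ℱ 1]) ω) ^ 2 +
    ∑ k ∈ Finset.Icc 2 N,
      (μ[(fun ω' => ((μ[f | ℱ k]) ω' - (μ[f | ℱ (k - 1)]) ω') ^ 2) | ℱ (k - 1)]) ω)

/-- Commutative case of Corollary 1.3, second inequality:
`‖s_N(f)‖_p ≤ √(p/2) ‖S_N(f)‖_p` for `2 ≤ p ≤ 4`. -/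
theorem condSq_le_sq
    {Ω : Type*} {m0 : MeasurableSpace Ω} (μ : Measure Ω) [IsProbabilityMeasure μ]
    (ℱ : Filtration ℕ m0)
    (p : ℝ) (hp2 : 2 ≤ p) (hp4 : p ≤ 4)
    (f : Ω → ℝ) (hmeas : Measurable f) (hbdd : ∃ C : ℝ, ∀ ω, |f ω| ≤ C)
    (N : ℕ) (hN : 2 ≤ N) :
    pnorm μ p (condSqFn μ ℱ f N)
      ≤ ENNReal.ofReal (Real.sqrt (p / 2)) * pnorm μ p (sqFn μ ℱ f N) := by
  obtain ⟨C, hC⟩ := hbdd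
  have hp0 : (0:ℝ) < p := by linarith
  set q : ℝ := p / 2 with hq_def
  have hq1 : 1 ≤ q := by rw [hq_def]; linarith
  have hq0 : (0:ℝ) < q := by linarith
  set C0 : ℝ := max C 0 with hC0_def
  have hC0 : 0 ≤ C0 := le_max_right _ _
  have hfC0 : ∀ ω, |f ω| ≤ C0 := fun ω => le_trans (hC ω) (le_max_left _ _)
  set K : ℝ := 4 * C0 ^ 2 with hK_def
  have hK : 0 ≤ K := by positivity
  set u : ℕ → Ω → ℝ := fun k ω => if k ≤ 1 then ((μ[f | ℱ 1]) ω) ^ 2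
    else ((μ[f | ℱ k]) ω - (μ[f | ℱ (k-1)]) ω) ^ 2 with hu_def
  have hu1 : ∀ ω, u 1 ω = ((μ[f | ℱ 1]) ω) ^ 2 := fun ω => by simp [hu_def]
  have huk : ∀ k, 2 ≤ k → u k = fun ω => ((μ[f | ℱ k]) ω - (μ[f | ℱ (k-1)]) ω) ^ 2 := by
    intro k hk
    funext ω
    simp only [hu_def]
    rw [if_neg (by omega)]
  have hu_sm : ∀ k, 1 ≤ k → StronglyMeasurable[ℱ k] (u k) := by
    intro k hk
    rcases Nat.lt_or_ge k 2 with h1 | h2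
    · have hk1 : k = 1 := by omega
      subst hk1
      have : u 1 = fun ω => ((μ[f | ℱ 1]) ω) ^ 2 := funext hu1
      rw [this]
      exact (stronglyMeasurable_condExp.measurable.pow_const 2).stronglyMeasurable
    · rw [huk k h2]
      have hm1 : Measurable[ℱ k] (μ[f | ℱ k]) := stronglyMeasurable_condExp.measurable
      have hm2 : Measurable[ℱ k] (μ[f | ℱ (k-1)]) :=
        (stronglyMeasurable_condExp.mono (ℱ.mono (Nat.sub_le k 1))).measurable
      exact ((hm1.sub hm2).pow_const 2).stronglyMeasurable
  have hu_nonneg : ∀ k ω, 0 ≤ u k ω := by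
    intro k ω
    simp only [hu_def]
    split_ifs <;> positivity
  have hcb : ∀ j : ℕ, ∀ᵐ ω ∂μ, |(μ[f | ℱ j]) ω| ≤ C0 := by
    intro j
    have h := ae_bdd_condExp_of_ae_bdd (m := ℱ j) (μ := μ) (R := ⟨C0, hC0⟩)
      (Filter.Eventually.of_forall hfC0)
    exact h
  have hu_bdd : ∀ k, ∀ᵐ ω ∂μ, u k ω ≤ K := by
    intro k
    filter_upwards [hcb 1, hcb k, hcb (k-1)] with ω h1 h2 h3
    simp only [hu_def]
    split_ifs
    · have := abs_le.mp h1
      rw [hK_def]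
      nlinarith
    · have ha := abs_le.mp h2
      have hb := abs_le.mp h3
      rw [hK_def]
      nlinarith
  have hdd := dual_doob μ ℱ hq1 N hN u hK hu_sm hu_nonneg hu_bdd
  -- identify the two functions with the square-function expressions
  have hGA : ∀ ω, u 1 ω + ∑ k ∈ Icc 2 N, (μ[u k | ℱ (k - 1)]) ω
      = ((μ[f | ℱ 1]) ω) ^ 2 + ∑ k ∈ Finset.Icc 2 N,
          (μ[(fun ω' => ((μ[f | ℱ k]) ω' - (μ[f | ℱ (k - 1)]) ω') ^ 2) | ℱ (k - 1)]) ω := by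
    intro ω
    rw [hu1 ω]
    congr 1
    apply Finset.sum_congr rfl
    intro k hk
    rw [Finset.mem_Icc] at hk
    rw [huk k hk.1]
  have hHB : ∀ ω, u 1 ω + ∑ k ∈ Icc 2 N, u k ω
      = ((μ[f | ℱ 1]) ω) ^ 2 + ∑ k ∈ Finset.Icc 2 N,
          ((μ[f | ℱ k]) ω - (μ[f | ℱ (k - 1)]) ω) ^ 2 := by
    intro ω
    rw [hu1 ω]
    congr 1
    apply Finset.sum_congr rfl
    intro k hk
    rw [Finset.mem_Icc] at hk
    rw [huk k hk.1]
  have hG_nonneg : ∀ᵐ ω ∂μ, 0 ≤ u 1 ω + ∑ k ∈ Icc 2 N, (μ[u k | ℱ (k - 1)]) ω := by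
    have hall : ∀ᵐ ω ∂μ, ∀ k, 0 ≤ (μ[u k | ℱ (k - 1)]) ω := by
      rw [ae_all_iff]
      intro k
      have h := condExp_nonneg (m := ℱ (k-1)) (μ := μ)
        (Filter.Eventually.of_forall (hu_nonneg k))
      exact h
    filter_upwards [hall] with ω hω
    exact add_nonneg (hu_nonneg 1 ω) (Finset.sum_nonneg fun k _ => hω k)
  have hH_nonneg : ∀ ω, 0 ≤ u 1 ω + ∑ k ∈ Icc 2 N, u k ω :=
    fun ω => add_nonneg (hu_nonneg 1 ω) (Finset.sum_nonneg fun k _ => hu_nonneg k ω)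
  rw [pnorm, pnorm]
  have eL : ∫⁻ ω, ENNReal.ofReal |condSqFn μ ℱ f N ω| ^ p ∂μ
      = ∫⁻ ω, ENNReal.ofReal (u 1 ω + ∑ k ∈ Icc 2 N, (μ[u k | ℱ (k - 1)]) ω) ^ q ∂μ := by
    apply lintegral_congr_ae
    filter_upwards [hG_nonneg] with ω hω
    rw [condSqFn, ← hGA ω, abs_of_nonneg (Real.sqrt_nonneg _), Real.sqrt_eq_rpow,
      ← ENNReal.ofReal_rpow_of_nonneg hω (by norm_num), ← ENNReal.rpow_mul]
    congr 1
    rw [hq_def]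
    ring
  have eR : ∫⁻ ω, ENNReal.ofReal |sqFn μ ℱ f N ω| ^ p ∂μ
      = ∫⁻ ω, ENNReal.ofReal (u 1 ω + ∑ k ∈ Icc 2 N, u k ω) ^ q ∂μ := by
    apply lintegral_congr_ae
    filter_upwards with ω
    rw [sqFn, ← hHB ω, abs_of_nonneg (Real.sqrt_nonneg _), Real.sqrt_eq_rpow,
      ← ENNReal.ofReal_rpow_of_nonneg (hH_nonneg ω) (by norm_num), ← ENNReal.rpow_mul]
    congr 1
    rw [hq_def]
    ring
  rw [eL, eR]
  have hconst : (ENNReal.ofReal (q ^ q)) ^ (1/p) = ENNReal.ofReal (Real.sqrt q) := by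
    rw [ENNReal.ofReal_rpow_of_nonneg (by positivity) (by positivity)]
    congr 1
    rw [← Real.rpow_mul hq0.le, Real.sqrt_eq_rpow]
    congr 1
    rw [hq_def]
    field_simp
  calc (∫⁻ ω, ENNReal.ofReal (u 1 ω + ∑ k ∈ Icc 2 N, (μ[u k | ℱ (k - 1)]) ω) ^ q ∂μ) ^ (1/p)
      ≤ (ENNReal.ofReal (q ^ q) * ∫⁻ ω, ENNReal.ofReal (u 1 ω + ∑ k ∈ Icc 2 N, u k ω) ^ q ∂μ) ^ (1/p) :=
        ENNReal.rpow_le_rpow hdd (by positivity)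
    _ = (ENNReal.ofReal (q ^ q)) ^ (1/p)
        * (∫⁻ ω, ENNReal.ofReal (u 1 ω + ∑ k ∈ Icc 2 N, u k ω) ^ q ∂μ) ^ (1/p) :=
        ENNReal.mul_rpow_of_nonneg _ _ (by positivity)
    _ = ENNReal.ofReal (Real.sqrt q)
        * (∫⁻ ω, ENNReal.ofReal (u 1 ω + ∑ k ∈ Icc 2 N, u k ω) ^ q ∂μ) ^ (1/p) := by
        rw [hconst]
end

section
/- Let a and b be positive definite n×n complex matrices and let 0 < p < 1. Then (Tr(a^p))^{1/p} ≤ (Tr(b^p))^{(1−p)/p} · Re Tr(a · b^{p−1}). (Matrix case of the paper's Lemma 2.1: ‖a‖_p ≤ ‖b‖_p^{1−p} τ(a b^{p−1}) for positive invertible operators, where ‖a‖_p = (τ(a^p))^{1/p}.) -/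
open Matrix
open scoped ComplexOrder

lemma scalar_young {x y p : ℝ} (hx : 0 ≤ x) (hy : 0 < y) (hp0 : 0 < p) (hp1 : p < 1) :
    x ^ p ≤ p * (x * y ^ (p - 1)) + (1 - p) * y ^ p := by
  have h := Real.geom_mean_le_arith_mean2_weighted (w₁ := p) (w₂ := 1 - p)
      (p₁ := x * y ^ (p - 1)) (p₂ := y ^ p) hp0.le (by linarith)
      (mul_nonneg hx (Real.rpow_nonneg hy.le _)) (Real.rpow_nonneg hy.le _) (by ring)
  calc x ^ p = (x * y ^ (p - 1)) ^ p * (y ^ p) ^ (1 - p) := by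
        rw [Real.mul_rpow hx (Real.rpow_nonneg hy.le _), ← Real.rpow_mul hy.le,
          ← Real.rpow_mul hy.le, mul_assoc, ← Real.rpow_add hy]
        rw [show (p - 1) * p + p * (1 - p) = 0 by ring, Real.rpow_zero, mul_one]
    _ ≤ p * (x * y ^ (p - 1)) + (1 - p) * y ^ p := h

lemma trace_cfc_re {n : ℕ} {A : Matrix (Fin n) (Fin n) ℂ} (hA : A.IsHermitian) (f : ℝ → ℝ) :
    (cfc f A).trace.re = ∑ i, f (hA.eigenvalues i) := by
  rw [hA.cfc_eq, Matrix.IsHermitian.cfc, Unitary.conjStarAlgAut_apply, Matrix.trace_mul_cycle,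
    Unitary.coe_star_mul_self, Matrix.one_mul, Matrix.trace_diagonal]
  simp [Complex.ofReal_re]

lemma row_sum_normSq {n : ℕ} (M : Matrix (Fin n) (Fin n) ℂ)
    (hM : M ∈ Matrix.unitaryGroup (Fin n) ℂ) (i : Fin n) :
    ∑ j, Complex.normSq (M i j) = 1 := by
  have h := Matrix.mem_unitaryGroup_iff.mp hM
  have h2 := congrArg (fun N : Matrix (Fin n) (Fin n) ℂ => (N i i).re) h
  simpa [Matrix.mul_apply, Matrix.conjTranspose_apply, Matrix.one_apply,
    ← Complex.normSq_eq_conj_mul_self, mul_comm, Complex.re_sum, Complex.normSq_apply] using h2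

lemma col_sum_normSq {n : ℕ} (M : Matrix (Fin n) (Fin n) ℂ)
    (hM : M ∈ Matrix.unitaryGroup (Fin n) ℂ) (j : Fin n) :
    ∑ i, Complex.normSq (M i j) = 1 := by
  have h := Matrix.mem_unitaryGroup_iff'.mp hM
  have h2 := congrArg (fun N : Matrix (Fin n) (Fin n) ℂ => (N j j).re) h
  simpa [Matrix.mul_apply, Matrix.conjTranspose_apply, Matrix.one_apply,
    ← Complex.normSq_eq_conj_mul_self, Complex.re_sum] using h2

lemma trace_mul_cfc_re {n : ℕ} {A B : Matrix (Fin n) (Fin n) ℂ}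
    (hA : A.IsHermitian) (hB : B.IsHermitian) (f : ℝ → ℝ) :
    (A * cfc f B).trace.re =
      ∑ i, ∑ j, Complex.normSq ((star (hA.eigenvectorUnitary : Matrix (Fin n) (Fin n) ℂ)
          * (hB.eigenvectorUnitary : Matrix (Fin n) (Fin n) ℂ)) i j)
        * (hA.eigenvalues i * f (hB.eigenvalues j)) := by
  have hco : ∀ x : ℝ, (RCLike.ofReal x : ℂ) = (x : ℂ) := fun x => rfl
  rw [hB.cfc_eq, Matrix.IsHermitian.cfc, Unitary.conjStarAlgAut_apply]
  set U : Matrix (Fin n) (Fin n) ℂ := (hA.eigenvectorUnitary : Matrix (Fin n) (Fin n) ℂ) with hU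
  set V : Matrix (Fin n) (Fin n) ℂ := (hB.eigenvectorUnitary : Matrix (Fin n) (Fin n) ℂ) with hV
  set M : Matrix (Fin n) (Fin n) ℂ := star U * V with hM
  have hAeq : A = U * diagonal (RCLike.ofReal ∘ hA.eigenvalues) * star U := hA.spectral_theorem
  have h1 : A * (V * diagonal (RCLike.ofReal ∘ f ∘ hB.eigenvalues) * star V)
      = U * (diagonal (RCLike.ofReal ∘ hA.eigenvalues) * M
          * diagonal (RCLike.ofReal ∘ f ∘ hB.eigenvalues) * star V) := by
    conv_lhs => rw [hAeq]
    simp only [hM, Matrix.mul_assoc]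
  rw [h1, Matrix.trace_mul_comm]
  have h2 : diagonal (RCLike.ofReal ∘ hA.eigenvalues) * M
        * diagonal (RCLike.ofReal ∘ f ∘ hB.eigenvalues) * star V * U
      = diagonal (RCLike.ofReal ∘ hA.eigenvalues) * M
        * diagonal (RCLike.ofReal ∘ f ∘ hB.eigenvalues) * star M := by
    rw [hM, Matrix.star_mul, star_star]; simp only [Matrix.mul_assoc]
  rw [h2]
  have h3 : (diagonal (RCLike.ofReal ∘ hA.eigenvalues) * M
        * diagonal (RCLike.ofReal ∘ f ∘ hB.eigenvalues) * star M).trace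
      = ∑ i, ∑ j, ((Complex.normSq (M i j) * (hA.eigenvalues i * f (hB.eigenvalues j)) : ℝ) : ℂ) := by
    rw [Matrix.trace]
    refine Finset.sum_congr rfl fun i _ => ?_
    rw [Matrix.diag_apply, Matrix.mul_apply]
    refine Finset.sum_congr rfl fun j _ => ?_
    rw [Matrix.mul_diagonal, Matrix.diagonal_mul, Matrix.star_apply]
    rw [show (RCLike.ofReal ∘ hA.eigenvalues) i * M i j * (RCLike.ofReal ∘ f ∘ hB.eigenvalues) j
          * star (M i j)
        = (M i j * star (M i j)) * ((hA.eigenvalues i : ℂ) * (f (hB.eigenvalues j) : ℂ)) by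
      simp only [Function.comp_apply, hco]; ring]
    rw [Complex.star_def, Complex.mul_conj]
    push_cast
    ring
  rw [h3, Complex.re_sum]
  refine Finset.sum_congr rfl fun i _ => ?_
  rw [Complex.re_sum]
  refine Finset.sum_congr rfl fun j _ => ?_
  simp

/-- The fractional power `a^r` of a matrix, defined via the continuous functional
calculus (equivalently, via the spectral decomposition for Hermitian matrices). -/
noncomputable def matRpow {n : ℕ} (a : Matrix (Fin n) (Fin n) ℂ) (r : ℝ) :
    Matrix (Fin n) (Fin n) ℂ :=
  cfc (fun x : ℝ => x ^ r) a

/-- Matrix case of Lemma 2.1: for positive definite `a, b` and `0 < p < 1`,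
`(Tr(a^p))^{1/p} ≤ (Tr(b^p))^{(1−p)/p} · Re Tr(a b^{p−1})`. -/
theorem trace_rpow_le {n : ℕ} (a b : Matrix (Fin n) (Fin n) ℂ)
    (ha : a.PosDef) (hb : b.PosDef)
    (p : ℝ) (hp0 : 0 < p) (hp1 : p < 1) :
    ((matRpow a p).trace).re ^ (1 / p)
      ≤ ((matRpow b p).trace).re ^ ((1 - p) / p) * ((a * matRpow b (p - 1)).trace).re := by
  have ha' : a.IsHermitian := ha.1
  have hb' : b.IsHermitian := hb.1
  have hlp : ∀ i, 0 < ha'.eigenvalues i := fun i => ha.eigenvalues_pos i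
  have hmp : ∀ j, 0 < hb'.eigenvalues j := fun j => hb.eigenvalues_pos j
  set lam : Fin n → ℝ := ha'.eigenvalues with hlam
  set mu : Fin n → ℝ := hb'.eigenvalues with hmu
  set M : Matrix (Fin n) (Fin n) ℂ :=
    star (ha'.eigenvectorUnitary : Matrix (Fin n) (Fin n) ℂ)
      * (hb'.eigenvectorUnitary : Matrix (Fin n) (Fin n) ℂ) with hMdef
  have hMu : M ∈ Matrix.unitaryGroup (Fin n) ℂ := by
    rw [Matrix.mem_unitaryGroup_iff, hMdef, Matrix.star_mul, star_star, Matrix.mul_assoc,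
      ← Matrix.mul_assoc (hb'.eigenvectorUnitary : Matrix (Fin n) (Fin n) ℂ),
      Unitary.mul_star_self_of_mem (SetLike.coe_mem _), Matrix.one_mul,
      Unitary.star_mul_self_of_mem (SetLike.coe_mem _)]
  set w : Fin n → Fin n → ℝ := fun i j => Complex.normSq (M i j) with hwdef
  have hw0 : ∀ i j, 0 ≤ w i j := fun i j => Complex.normSq_nonneg _
  have hrow : ∀ i, ∑ j, w i j = 1 := row_sum_normSq M hMu
  have hcol : ∀ j, ∑ i, w i j = 1 := col_sum_normSq M hMu
  simp only [matRpow]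
  rw [trace_cfc_re ha', trace_cfc_re hb', trace_mul_cfc_re ha' hb']
  set S := ∑ i, lam i ^ p with hSdef
  set T2 := ∑ j, mu j ^ p with hT2def
  set T1 := ∑ i, ∑ j, w i j * (lam i * mu j ^ (p - 1)) with hT1def
  rcases Nat.eq_zero_or_pos n with hn | hn
  · subst hn
    simp only [hSdef, hT1def, hT2def, Finset.univ_eq_empty, Finset.sum_empty]
    rw [Real.zero_rpow (one_div_pos.mpr hp0).ne', mul_zero]
  have : Nonempty (Fin n) := Fin.pos_iff_nonempty.mp hn
  have hT2pos : 0 < T2 :=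
    Finset.sum_pos (fun j _ => Real.rpow_pos_of_pos (hmp j) p) Finset.univ_nonempty
  have hinner : ∀ i, 0 < ∑ j, w i j * (lam i * mu j ^ (p - 1)) := by
    intro i
    obtain ⟨j₀, hj₀⟩ : ∃ j, 0 < w i j := by
      by_contra h
      push_neg at h
      have h0 : ∑ j, w i j = 0 :=
        Finset.sum_eq_zero fun j _ => le_antisymm (h j) (hw0 i j)
      rw [hrow i] at h0; norm_num at h0
    refine Finset.sum_pos' (fun j _ => mul_nonneg (hw0 i j)
      (mul_nonneg (hlp i).le (Real.rpow_nonneg (hmp j).le _)))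
      ⟨j₀, Finset.mem_univ _, mul_pos hj₀ (mul_pos (hlp i)
        (Real.rpow_pos_of_pos (hmp j₀) _))⟩
  have hT1pos : 0 < T1 := Finset.sum_pos (fun i _ => hinner i) Finset.univ_nonempty
  set t := T1 / T2 with htdef
  have htpos : 0 < t := div_pos hT1pos hT2pos
  -- the key inequality
  have key : S ≤ p * (t ^ (p - 1) * T1) + (1 - p) * (t ^ p * T2) := by
    have expand : ∀ i j, w i j * (p * (lam i * (t * mu j) ^ (p - 1)) + (1 - p) * (t * mu j) ^ p)
        = p * t ^ (p - 1) * (w i j * (lam i * mu j ^ (p - 1)))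
          + (1 - p) * t ^ p * (w i j * mu j ^ p) := by
      intro i j
      rw [Real.mul_rpow htpos.le (hmp j).le, Real.mul_rpow htpos.le (hmp j).le]
      ring
    calc S = ∑ i, (∑ j, w i j) * lam i ^ p := by
            refine Finset.sum_congr rfl fun i _ => ?_
            rw [hrow i, one_mul]
      _ = ∑ i, ∑ j, w i j * lam i ^ p := by
            refine Finset.sum_congr rfl fun i _ => ?_
            rw [Finset.sum_mul]
      _ ≤ ∑ i, ∑ j, w i j * (p * (lam i * (t * mu j) ^ (p - 1)) + (1 - p) * (t * mu j) ^ p) := by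
            refine Finset.sum_le_sum fun i _ => Finset.sum_le_sum fun j _ => ?_
            exact mul_le_mul_of_nonneg_left
              (scalar_young (hlp i).le (mul_pos htpos (hmp j)) hp0 hp1) (hw0 i j)
      _ = p * t ^ (p - 1) * T1 + (1 - p) * t ^ p * (∑ i, ∑ j, w i j * mu j ^ p) := by
            simp only [expand, Finset.sum_add_distrib, ← Finset.mul_sum]
            rfl
      _ = p * (t ^ (p - 1) * T1) + (1 - p) * (t ^ p * T2) := by
            rw [Finset.sum_comm]
            have : ∑ j, ∑ i, w i j * mu j ^ p = T2 := by
              refine Finset.sum_congr rfl fun j _ => ?_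
              rw [← Finset.sum_mul, hcol j, one_mul]
            rw [this]; ring
  have e1 : t ^ (p - 1) * T1 = T1 ^ p * T2 ^ (1 - p) := by
    rw [htdef, div_eq_mul_inv, Real.mul_rpow hT1pos.le (inv_nonneg.mpr hT2pos.le),
      ← Real.rpow_neg_one T2, ← Real.rpow_mul hT2pos.le]
    rw [show T1 ^ (p - 1) * T2 ^ (-1 * (p - 1)) * T1 = T1 ^ (p - 1) * T1 ^ (1:ℝ) * T2 ^ (1 - p) by
      rw [Real.rpow_one]; rw [show -1 * (p - 1) = 1 - p by ring]; ring]
    rw [← Real.rpow_add hT1pos, sub_add_cancel]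
  have e2 : t ^ p * T2 = T1 ^ p * T2 ^ (1 - p) := by
    rw [htdef, div_eq_mul_inv, Real.mul_rpow hT1pos.le (inv_nonneg.mpr hT2pos.le),
      ← Real.rpow_neg_one T2, ← Real.rpow_mul hT2pos.le]
    rw [show T1 ^ p * T2 ^ (-1 * p) * T2 = T1 ^ p * (T2 ^ (-p) * T2 ^ (1:ℝ)) by
      rw [Real.rpow_one]; rw [show -1 * p = -p by ring]; ring]
    rw [← Real.rpow_add hT2pos, neg_add_eq_sub]
  rw [e1, e2] at key
  have key' : S ≤ T1 ^ p * T2 ^ (1 - p) := by linarith [key]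
  have hS0 : 0 ≤ S := Finset.sum_nonneg fun i _ => Real.rpow_nonneg (hlp i).le _
  calc S ^ (1 / p) ≤ (T1 ^ p * T2 ^ (1 - p)) ^ (1 / p) :=
        Real.rpow_le_rpow hS0 key' (one_div_pos.mpr hp0).le
    _ = T2 ^ ((1 - p) / p) * T1 := by
        rw [Real.mul_rpow (Real.rpow_nonneg hT1pos.le _) (Real.rpow_nonneg hT2pos.le _),
          ← Real.rpow_mul hT1pos.le, ← Real.rpow_mul hT2pos.le,
          mul_one_div_cancel hp0.ne', Real.rpow_one,
          show (1 - p) * (1 / p) = (1 - p) / p by ring]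
        ring
end

section
/- Let a and b be positive definite n×n complex matrices with a ≤ b, and let 0 < p ≤ 1. Then Re Tr((b − a) · b^{p−1}) ≤ (1/p) · (Tr(b^p) − Tr(a^p)). (Matrix case of the paper's Lemma 2.2: τ((b−a)b^{p−1}) ≤ (1/p) τ(b^p − a^p) for positive invertible operators a ≤ b.) -/
open Matrix
open scoped ComplexOrder

private lemma tangent_aux {μ d p : ℝ} (hμ : 0 < μ) (hd : 0 ≤ d) (hp0 : 0 < p) (hp1 : p ≤ 1) :
    (μ - d) * μ ^ (p - 1) ≤ (1 / p) * (μ ^ p - d ^ p) := by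
  have hs : (-1 : ℝ) ≤ d / μ - 1 := by
    have : 0 ≤ d / μ := div_nonneg hd hμ.le
    linarith
  have key := rpow_one_add_le_one_add_mul_self hs hp0.le hp1
  rw [show (1 + (d / μ - 1)) = d / μ by ring] at key
  have hμp : 0 < μ ^ p := Real.rpow_pos_of_pos hμ p
  have hid : μ ^ p = μ ^ (p - 1) * μ := by
    rw [← Real.rpow_add_one hμ.ne' (p - 1)]; ring_nf
  have h1 : d ^ p ≤ (1 + p * (d / μ - 1)) * μ ^ p := by
    calc d ^ p = (d / μ) ^ p * μ ^ p := by
          rw [Real.div_rpow hd hμ.le, div_mul_cancel₀ _ hμp.ne']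
      _ ≤ _ := mul_le_mul_of_nonneg_right key hμp.le
  have h3 : d / μ * μ ^ p = d * μ ^ (p - 1) := by
    rw [hid]; field_simp
  have h2 : (1 + p * (d / μ - 1)) * μ ^ p = μ ^ p + p * (d * μ ^ (p - 1)) - p * μ ^ p := by
    rw [← h3]; ring
  rw [h2] at h1
  rw [one_div, inv_mul_eq_div, le_div_iff₀ hp0]
  nlinarith [h1, hid]

private lemma jensen_aux {m : ℕ} (t x : Fin m → ℝ) (ht : ∀ j, 0 ≤ t j) (hx : ∀ j, 0 ≤ x j)
    (hsum : ∑ j, t j = 1) {p : ℝ} (hp0 : 0 ≤ p) (hp1 : p ≤ 1) :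
    ∑ j, t j * x j ^ p ≤ (∑ j, t j * x j) ^ p := by
  have := (Real.concaveOn_rpow hp0 hp1).le_map_sum (t := Finset.univ)
    (fun j _ => ht j) hsum (fun j _ => Set.mem_Ici.mpr (hx j))
  simpa [smul_eq_mul] using this

/-- Matrix case of Lemma 2.2: for positive definite `a ≤ b` and `0 < p ≤ 1`,
`Re Tr((b−a) b^{p−1}) ≤ (1/p)(Tr(b^p) − Tr(a^p))`. -/
theorem trace_sub_mul_rpow_le {n : ℕ} (a b : Matrix (Fin n) (Fin n) ℂ)
    (ha : a.PosDef) (hb : b.PosDef) (hab : (b - a).PosSemidef)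
    (p : ℝ) (hp0 : 0 < p) (hp1 : p ≤ 1) :
    (((b - a) * matRpow b (p - 1)).trace).re
      ≤ (1 / p) * (((matRpow b p).trace).re - ((matRpow a p).trace).re) := by
  classical
  set μ : Fin n → ℝ := hb.1.eigenvalues with hμdef
  set ν : Fin n → ℝ := ha.1.eigenvalues with hνdef
  have hμpos : ∀ i, 0 < μ i := fun i => hb.eigenvalues_pos i
  have hνpos : ∀ i, 0 < ν i := fun i => ha.eigenvalues_pos i
  set U : Matrix (Fin n) (Fin n) ℂ := (hb.1.eigenvectorUnitary : Matrix (Fin n) (Fin n) ℂ) with hUdef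
  set V : Matrix (Fin n) (Fin n) ℂ := (ha.1.eigenvectorUnitary : Matrix (Fin n) (Fin n) ℂ) with hVdef
  have hUU : star U * U = 1 := Matrix.mem_unitaryGroup_iff'.mp hb.1.eigenvectorUnitary.2
  have hUU' : U * star U = 1 := Matrix.mem_unitaryGroup_iff.mp hb.1.eigenvectorUnitary.2
  have hVV : star V * V = 1 := Matrix.mem_unitaryGroup_iff'.mp ha.1.eigenvectorUnitary.2
  have hVV' : V * star V = 1 := Matrix.mem_unitaryGroup_iff.mp ha.1.eigenvectorUnitary.2
  -- formulas for matRpow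
  have hbr : ∀ r : ℝ, matRpow b r = U * diagonal (fun i => (μ i ^ r : ℝ) : Fin n → ℂ) * star U := by
    intro r
    rw [matRpow, hb.1.cfc_eq, Matrix.IsHermitian.cfc]
    rfl
  have har : ∀ r : ℝ, matRpow a r = V * diagonal (fun i => (ν i ^ r : ℝ) : Fin n → ℂ) * star V := by
    intro r
    rw [matRpow, ha.1.cfc_eq, Matrix.IsHermitian.cfc]
    rfl
  have trace_conjU : ∀ M : Matrix (Fin n) (Fin n) ℂ, (U * M * star U).trace = M.trace := by
    intro M
    rw [trace_mul_cycle, hUU, one_mul]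
  have trace_conjV : ∀ M : Matrix (Fin n) (Fin n) ℂ, (V * M * star V).trace = M.trace := by
    intro M
    rw [trace_mul_cycle, hVV, one_mul]
  have hTrB : ∀ r : ℝ, ((matRpow b r).trace).re = ∑ i, μ i ^ r := by
    intro r
    rw [hbr, trace_conjU, trace_diagonal, ← Complex.ofReal_sum, Complex.ofReal_re]
  have hTrA : ∀ r : ℝ, ((matRpow a r).trace).re = ∑ i, ν i ^ r := by
    intro r
    rw [har, trace_conjV, trace_diagonal, ← Complex.ofReal_sum, Complex.ofReal_re]
  -- the conjugated matrix and weights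
  set c : Matrix (Fin n) (Fin n) ℂ := star U * a * U with hcdef
  set w : Matrix (Fin n) (Fin n) ℂ := star U * V with hwdef
  set t : Fin n → Fin n → ℝ := fun i j => Complex.normSq (w i j) with htdef
  set d : Fin n → ℝ := fun i => (c i i).re with hddef
  have hc : c = w * diagonal (fun j => (ν j : ℂ)) * star w := by
    rw [hcdef]
    conv_lhs => rw [ha.1.spectral_theorem, Unitary.conjStarAlgAut_apply]
    rw [hwdef, Matrix.star_mul, star_star]
    have : (RCLike.ofReal ∘ ha.1.eigenvalues : Fin n → ℂ) = fun j => (ν j : ℂ) := rfl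
    rw [← hVdef, this]
    simp only [mul_assoc]
  have hcii : ∀ i, c i i = ∑ j, ((t i j * ν j : ℝ) : ℂ) := by
    intro i
    rw [hc]
    rw [Matrix.mul_apply]
    refine Finset.sum_congr rfl fun j _ => ?_
    rw [Matrix.mul_diagonal, Matrix.star_apply, Complex.star_def, mul_right_comm,
      Complex.mul_conj, ← Complex.ofReal_mul]
  have hdi : ∀ i, d i = ∑ j, t i j * ν j := by
    intro i
    rw [hddef]
    simp only []
    rw [hcii, ← Complex.ofReal_sum, Complex.ofReal_re]
  have hdnonneg : ∀ i, 0 ≤ d i := by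
    intro i
    rw [hdi]
    exact Finset.sum_nonneg fun j _ => mul_nonneg (Complex.normSq_nonneg _) (hνpos j).le
  have hww' : w * star w = 1 := by
    rw [hwdef, Matrix.star_mul, star_star, mul_assoc, ← mul_assoc V, hVV', one_mul, hUU]
  have hw'w : star w * w = 1 := by
    rw [hwdef, Matrix.star_mul, star_star, mul_assoc, ← mul_assoc U, hUU', one_mul, hVV]
  have hrow : ∀ i, ∑ j, t i j = 1 := by
    intro i
    have h1 : (w * star w) i i = 1 := by rw [hww']; simp
    rw [Matrix.mul_apply] at h1
    have h2 : ∀ j, w i j * (star w) j i = ((t i j : ℝ) : ℂ) := by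
      intro j
      rw [Matrix.star_apply, Complex.star_def, Complex.mul_conj]
    rw [Finset.sum_congr rfl (fun j _ => h2 j), ← Complex.ofReal_sum] at h1
    exact_mod_cast h1
  have hcol : ∀ j, ∑ i, t i j = 1 := by
    intro j
    have h1 : (star w * w) j j = 1 := by rw [hw'w]; simp
    rw [Matrix.mul_apply] at h1
    have h2 : ∀ i, (star w) j i * w i j = ((t i j : ℝ) : ℂ) := by
      intro i
      rw [Matrix.star_apply, Complex.star_def, mul_comm, Complex.mul_conj]
    rw [Finset.sum_congr rfl (fun i _ => h2 i), ← Complex.ofReal_sum] at h1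
    exact_mod_cast h1
  -- LHS computation
  have hLHS : (((b - a) * matRpow b (p - 1)).trace).re
      = ∑ i, (μ i - d i) * μ i ^ (p - 1) := by
    rw [hbr (p - 1)]
    have e1 : (b - a) * (U * diagonal (fun i => (μ i ^ (p - 1) : ℝ) : Fin n → ℂ) * star U)
        = ((b - a) * U * diagonal (fun i => (μ i ^ (p - 1) : ℝ) : Fin n → ℂ)) * star U := by
      simp only [mul_assoc]
    rw [e1, Matrix.trace_mul_comm, ← mul_assoc, ← mul_assoc]
    have e2 : star U * (b - a) * U = diagonal (fun i => (μ i : ℂ)) - c := by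
      rw [Matrix.mul_sub, Matrix.sub_mul]
      congr 1
      have h := hb.1.conjStarAlgAut_star_eigenvectorUnitary
      rw [Unitary.conjStarAlgAut_star_apply] at h
      rw [← hUdef] at h
      rw [h]
      rfl
    rw [e2, Matrix.sub_mul, Matrix.trace_sub, Matrix.diagonal_mul_diagonal, Matrix.trace_diagonal]
    have e3 : (c * diagonal (fun i => (μ i ^ (p - 1) : ℝ) : Fin n → ℂ)).trace
        = ∑ i, c i i * ((μ i ^ (p - 1) : ℝ) : ℂ) := by
      rw [Matrix.trace]
      exact Finset.sum_congr rfl fun i _ => by rw [Matrix.diag, Matrix.mul_diagonal]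
    rw [e3, Complex.sub_re, Complex.re_sum, Complex.re_sum]
    rw [← Finset.sum_sub_distrib]
    refine Finset.sum_congr rfl fun i _ => ?_
    have : ((μ i : ℂ) * ((μ i ^ (p - 1) : ℝ) : ℂ)).re = μ i * μ i ^ (p - 1) := by
      rw [← Complex.ofReal_mul, Complex.ofReal_re]
    rw [this]
    have : (c i i * ((μ i ^ (p - 1) : ℝ) : ℂ)).re = d i * μ i ^ (p - 1) := by
      rw [hcii i, ← Complex.ofReal_sum, ← Complex.ofReal_mul, Complex.ofReal_re, hdi]
    rw [this]
    ring
  rw [hLHS, hTrB, hTrA]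
  -- Peierls / Jensen step
  have peierls : ∑ j, ν j ^ p ≤ ∑ i, d i ^ p := by
    calc ∑ j, ν j ^ p = ∑ j, (∑ i, t i j) * ν j ^ p := by
          refine Finset.sum_congr rfl fun j _ => ?_
          rw [hcol j, one_mul]
      _ = ∑ i, ∑ j, t i j * ν j ^ p := by
          rw [Finset.sum_comm]
          exact Finset.sum_congr rfl fun j _ => by rw [Finset.sum_mul]
      _ ≤ ∑ i, (∑ j, t i j * ν j) ^ p := by
          refine Finset.sum_le_sum fun i _ => ?_
          exact jensen_aux (t i) ν (fun j => Complex.normSq_nonneg _)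
            (fun j => (hνpos j).le) (hrow i) hp0.le hp1
      _ = ∑ i, d i ^ p := by
          exact Finset.sum_congr rfl fun i _ => by rw [← hdi]
  calc ∑ i, (μ i - d i) * μ i ^ (p - 1)
      ≤ ∑ i, (1 / p) * (μ i ^ p - d i ^ p) := by
        refine Finset.sum_le_sum fun i _ => ?_
        exact tangent_aux (hμpos i) (hdnonneg i) hp0 hp1
    _ = (1 / p) * (∑ i, μ i ^ p - ∑ i, d i ^ p) := by
        rw [← Finset.mul_sum, Finset.sum_sub_distrib]
    _ ≤ (1 / p) * (∑ i, μ i ^ p - ∑ j, ν j ^ p) := by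
        apply mul_le_mul_of_nonneg_left _ (by positivity)
        linarith [peierls]
end

section
/- Let a and b be positive semidefinite n×n complex matrices with a ≤ b, and let 1 ≤ p < ∞. Then Tr(b^p) − Tr(a^p) ≤ p · Re Tr((b − a) · b^{p−1}). (Matrix case of the paper's Lemma 2.4: τ(b^p − a^p) ≤ p τ((b−a)b^{p−1}) for 0 ≤ a ≤ b.) -/
open Matrix
open scoped ComplexOrder

lemma scalar_ineq {x y p : ℝ} (hx : 0 ≤ x) (hy : 0 ≤ y) (hp : 1 ≤ p) :
    y ^ p - x ^ p ≤ p * ((y - x) * y ^ (p - 1)) := by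
  have hp0 : (0:ℝ) < p := lt_of_lt_of_le one_pos hp
  have hpne : p ≠ 0 := hp0.ne'
  have hyoung := Real.geom_mean_le_arith_mean2_weighted
    (w₁ := (p-1)/p) (w₂ := 1/p) (p₁ := y ^ p) (p₂ := x ^ p)
    (div_nonneg (by linarith) hp0.le) (div_nonneg zero_le_one hp0.le)
    (Real.rpow_nonneg hy p) (Real.rpow_nonneg hx p)
    (by field_simp; ring)
  rw [← Real.rpow_mul hy, ← Real.rpow_mul hx] at hyoung
  have h1 : p * ((p-1)/p) = p - 1 := by field_simp
  have h2 : p * (1/p) = 1 := by field_simp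
  rw [h1, h2, Real.rpow_one] at hyoung
  have hmul : y ^ p = y * y ^ (p-1) := by
    have := Real.rpow_add' hy (y := 1) (z := p - 1) (by simp; linarith)
    rw [show (1:ℝ)+(p-1) = p by ring, Real.rpow_one] at this
    exact this
  have h3 : p * (y^(p-1) * x) ≤ (p-1) * y^p + x^p := by
    have h := mul_le_mul_of_nonneg_left hyoung hp0.le
    have e : p * ((p-1)/p * y^p + 1/p * x^p) = (p-1)*y^p + x^p := by
      field_simp
    rw [e] at h
    exact h
  calc y ^ p - x ^ p ≤ p * y^p - p * (y^(p-1) * x) := by linarith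
    _ = p * ((y - x) * y ^ (p-1)) := by rw [hmul]; ring

lemma traceA {n : ℕ} (U : Matrix (Fin n) (Fin n) ℂ) (hU : star U * U = 1)
    (d : Fin n → ℂ) : (U * diagonal d * star U).trace = ∑ i, d i := by
  rw [trace_mul_cycle, hU, one_mul, trace_diagonal]

lemma traceC {n : ℕ} (U : Matrix (Fin n) (Fin n) ℂ) (hU : star U * U = 1)
    (d e : Fin n → ℂ) :
    ((U * diagonal d * star U) * (U * diagonal e * star U)).trace = ∑ i, d i * e i := by
  have h1 : (U * diagonal d * star U) * (U * diagonal e * star U)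
      = U * diagonal (fun i => d i * e i) * star U := by
    calc (U * diagonal d * star U) * (U * diagonal e * star U)
        = U * (diagonal d * (star U * U) * diagonal e) * star U := by
          simp only [Matrix.mul_assoc]
      _ = U * diagonal (fun i => d i * e i) * star U := by
          rw [hU, mul_one, diagonal_mul_diagonal]
  rw [h1, traceA U hU]

lemma traceB {n : ℕ} (V U : Matrix (Fin n) (Fin n) ℂ) (d e : Fin n → ℂ) :
    ((V * diagonal d * star V) * (U * diagonal e * star U)).trace
      = ∑ i, ∑ j, d i * e j * ((star V * U) i j * star ((star V * U) i j)) := by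
  have h1 : (V * diagonal d * star V) * (U * diagonal e * star U)
      = V * (diagonal d * star V * U * diagonal e * star U) := by
    simp only [Matrix.mul_assoc]
  rw [h1, trace_mul_comm]
  have h2 : (diagonal d * star V * U * diagonal e * star U) * V
      = diagonal d * ((star V * U) * diagonal e * star (star V * U)) := by
    rw [Matrix.star_mul, star_star]
    simp only [Matrix.mul_assoc]
  rw [h2, Matrix.trace]
  refine Finset.sum_congr rfl fun i _ => ?_
  rw [Matrix.diag]
  rw [Matrix.diagonal_mul, Matrix.mul_apply, Finset.mul_sum]
  refine Finset.sum_congr rfl fun j _ => ?_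
  rw [Matrix.mul_diagonal, Matrix.star_apply]
  ring

lemma key_ineq {n : ℕ} (M : Matrix (Fin n) (Fin n) ℂ)
    (hM1 : star M * M = 1) (hM2 : M * star M = 1)
    (lam μ : Fin n → ℝ) (hlam : ∀ i, 0 ≤ lam i) (hμ : ∀ j, 0 ≤ μ j)
    (p : ℝ) (hp : 1 ≤ p) :
    (∑ j, μ j ^ p) - (∑ i, lam i ^ p)
      ≤ p * ((∑ j, μ j * μ j ^ (p-1))
          - ∑ i, ∑ j, lam i * μ j ^ (p-1) * Complex.normSq (M i j)) := by
  set c : Fin n → Fin n → ℝ := fun i j => Complex.normSq (M i j) with hc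
  have hcnn : ∀ i j, 0 ≤ c i j := fun i j => Complex.normSq_nonneg _
  have hrow : ∀ i, ∑ j, c i j = 1 := by
    intro i
    have h := congrArg (fun X : Matrix (Fin n) (Fin n) ℂ => X i i) hM2
    simp only [Matrix.mul_apply, Matrix.star_apply, Matrix.one_apply_eq] at h
    have h2 : ∀ j, M i j * star (M i j) = ((c i j : ℝ) : ℂ) := fun j => by
      rw [hc, Complex.star_def, Complex.mul_conj]
    rw [Finset.sum_congr rfl (fun j _ => h2 j)] at h
    have := congrArg Complex.re h
    simpa [Complex.re_sum] using this
  have hcol : ∀ j, ∑ i, c i j = 1 := by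
    intro j
    have h := congrArg (fun X : Matrix (Fin n) (Fin n) ℂ => X j j) hM1
    simp only [Matrix.mul_apply, Matrix.star_apply, Matrix.one_apply_eq] at h
    have h2 : ∀ i, star (M i j) * M i j = ((c i j : ℝ) : ℂ) := fun i => by
      rw [hc, mul_comm, Complex.star_def, Complex.mul_conj]
    rw [Finset.sum_congr rfl (fun i _ => h2 i)] at h
    have := congrArg Complex.re h
    simpa [Complex.re_sum] using this
  have e1 : ∑ j, μ j ^ p = ∑ i, ∑ j, c i j * μ j ^ p := by
    rw [Finset.sum_comm]
    refine Finset.sum_congr rfl fun j _ => ?_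
    rw [← Finset.sum_mul, hcol j, one_mul]
  have e2 : ∑ i, lam i ^ p = ∑ i, ∑ j, c i j * lam i ^ p := by
    refine Finset.sum_congr rfl fun i _ => ?_
    rw [← Finset.sum_mul, hrow i, one_mul]
  have e3 : ∑ j, μ j * μ j ^ (p-1) = ∑ i, ∑ j, c i j * (μ j * μ j ^ (p-1)) := by
    rw [Finset.sum_comm]
    refine Finset.sum_congr rfl fun j _ => ?_
    rw [← Finset.sum_mul, hcol j, one_mul]
  have e4 : ∑ i, ∑ j, lam i * μ j ^ (p-1) * c i j
      = ∑ i, ∑ j, c i j * (lam i * μ j ^ (p-1)) :=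
    Finset.sum_congr rfl fun i _ => Finset.sum_congr rfl fun j _ => by ring
  have main : ∑ i, ∑ j, (c i j * μ j ^ p - c i j * lam i ^ p)
      ≤ ∑ i, ∑ j, p * (c i j * (μ j * μ j ^ (p-1)) - c i j * (lam i * μ j ^ (p-1))) := by
    refine Finset.sum_le_sum fun i _ => Finset.sum_le_sum fun j _ => ?_
    have h := mul_le_mul_of_nonneg_left (scalar_ineq (hlam i) (hμ j) hp) (hcnn i j)
    calc c i j * μ j ^ p - c i j * lam i ^ p
        = c i j * (μ j ^ p - lam i ^ p) := by ring
      _ ≤ c i j * (p * ((μ j - lam i) * μ j ^ (p-1))) := h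
      _ = p * (c i j * (μ j * μ j ^ (p-1)) - c i j * (lam i * μ j ^ (p-1))) := by ring
  calc (∑ j, μ j ^ p) - ∑ i, lam i ^ p
      = ∑ i, ∑ j, (c i j * μ j ^ p - c i j * lam i ^ p) := by
        rw [e1, e2, ← Finset.sum_sub_distrib]
        exact Finset.sum_congr rfl fun i _ => (Finset.sum_sub_distrib _ _).symm
    _ ≤ ∑ i, ∑ j, p * (c i j * (μ j * μ j ^ (p-1)) - c i j * (lam i * μ j ^ (p-1))) := main
    _ = p * ((∑ j, μ j * μ j ^ (p-1))
          - ∑ i, ∑ j, lam i * μ j ^ (p-1) * Complex.normSq (M i j)) := by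
        rw [e3, e4, ← Finset.sum_sub_distrib, Finset.mul_sum]
        refine Finset.sum_congr rfl fun i _ => ?_
        rw [← Finset.sum_sub_distrib, Finset.mul_sum]

lemma t3aux {n : ℕ} (bmat U : Matrix (Fin n) (Fin n) ℂ) (hU1 : star U * U = 1)
    (mu e' : Fin n → ℝ)
    (hbd : bmat = U * diagonal (fun j => ((mu j : ℝ) : ℂ)) * star U) :
    ((bmat * (U * diagonal (fun j => ((e' j : ℝ) : ℂ)) * star U)).trace).re
      = ∑ j, mu j * e' j := by
  rw [hbd, traceC U hU1, Complex.re_sum]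
  refine Finset.sum_congr rfl fun j _ => ?_
  simp [← Complex.ofReal_mul]

lemma t4aux {n : ℕ} (amat V U : Matrix (Fin n) (Fin n) ℂ) (lam e' : Fin n → ℝ)
    (had : amat = V * diagonal (fun i => ((lam i : ℝ) : ℂ)) * star V) :
    ((amat * (U * diagonal (fun j => ((e' j : ℝ) : ℂ)) * star U)).trace).re
      = ∑ i, ∑ j, lam i * e' j * Complex.normSq ((star V * U) i j) := by
  rw [had, traceB V U, Complex.re_sum]
  refine Finset.sum_congr rfl fun i _ => ?_
  rw [Complex.re_sum]
  refine Finset.sum_congr rfl fun j _ => ?_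
  rw [Complex.star_def, Complex.mul_conj]
  simp [← Complex.ofReal_mul]

/-- Matrix case of Lemma 2.4: for positive semidefinite `a ≤ b` and `1 ≤ p < ∞`,
`Tr(b^p) − Tr(a^p) ≤ p · Re Tr((b−a) b^{p−1})`. -/
theorem trace_rpow_sub_le {n : ℕ} (a b : Matrix (Fin n) (Fin n) ℂ)
    (ha : a.PosSemidef) (hb : b.PosSemidef) (hab : (b - a).PosSemidef)
    (p : ℝ) (hp : 1 ≤ p) :
    ((matRpow b p).trace).re - ((matRpow a p).trace).re
      ≤ p * (((b - a) * matRpow b (p - 1)).trace).re := by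
  have hA : a.IsHermitian := ha.1
  have hB : b.IsHermitian := hb.1
  set U := (IsHermitian.eigenvectorUnitary hB : Matrix (Fin n) (Fin n) ℂ) with hUdef
  set V := (IsHermitian.eigenvectorUnitary hA : Matrix (Fin n) (Fin n) ℂ) with hVdef
  have hU1 : star U * U = 1 := Unitary.star_mul_self_of_mem (SetLike.coe_mem _)
  have hV1 : star V * V = 1 := Unitary.star_mul_self_of_mem (SetLike.coe_mem _)
  have hV2 : V * star V = 1 := Unitary.mul_star_self_of_mem (SetLike.coe_mem _)
  have hbp : matRpow b p
      = U * diagonal (fun j => ((hB.eigenvalues j ^ p : ℝ) : ℂ)) * star U :=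
    (hB.cfc_eq _).trans rfl
  have hbp' : matRpow b (p - 1)
      = U * diagonal (fun j => ((hB.eigenvalues j ^ (p-1) : ℝ) : ℂ)) * star U :=
    (hB.cfc_eq _).trans rfl
  have hap : matRpow a p
      = V * diagonal (fun i => ((hA.eigenvalues i ^ p : ℝ) : ℂ)) * star V :=
    (hA.cfc_eq _).trans rfl
  have t1 : ((matRpow b p).trace).re = ∑ j, hB.eigenvalues j ^ p := by
    rw [hbp, traceA U hU1, Complex.re_sum]
    simp
  have t2 : ((matRpow a p).trace).re = ∑ i, hA.eigenvalues i ^ p := by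
    rw [hap, traceA V hV1, Complex.re_sum]
    simp
  have hbd : b = U * diagonal (fun j => ((hB.eigenvalues j : ℝ) : ℂ)) * star U :=
    hB.spectral_theorem
  have had : a = V * diagonal (fun i => ((hA.eigenvalues i : ℝ) : ℂ)) * star V :=
    hA.spectral_theorem
  have t3 : ((b * matRpow b (p-1)).trace).re
      = ∑ j, hB.eigenvalues j * hB.eigenvalues j ^ (p-1) := by
    rw [hbp']
    exact t3aux b U hU1 hB.eigenvalues (fun j => hB.eigenvalues j ^ (p-1)) hbd
  have t4 : ((a * matRpow b (p-1)).trace).re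
      = ∑ i, ∑ j, hA.eigenvalues i * hB.eigenvalues j ^ (p-1)
          * Complex.normSq ((star V * U) i j) := by
    rw [hbp']
    exact t4aux a V U hA.eigenvalues (fun j => hB.eigenvalues j ^ (p-1)) had
  have hM1 : star (star V * U) * (star V * U) = 1 := by
    rw [Matrix.star_mul, star_star]
    calc star U * V * (star V * U) = star U * (V * star V) * U := by
          simp only [Matrix.mul_assoc]
      _ = 1 := by rw [hV2, mul_one, hU1]
  have hM2 : (star V * U) * star (star V * U) = 1 := by
    rw [Matrix.star_mul, star_star]
    calc star V * U * (star U * V) = star V * (U * star U) * V := by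
          simp only [Matrix.mul_assoc]
      _ = 1 := by
          rw [Unitary.mul_star_self_of_mem (SetLike.coe_mem _), mul_one, hV1]
  rw [sub_mul, trace_sub, Complex.sub_re, t1, t2, t3, t4]
  exact key_ineq (star V * U) hM1 hM2 _ _
    (fun i => ha.eigenvalues_nonneg i) (fun j => hb.eigenvalues_nonneg j) p hp
end
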